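/- arXiv:1805.02990 — 7 statements merged into one kernel-verified Lean document; each statement's English description precedes it below -/
import Mathlib

section
/- Stationary bound for the accumulated error sum. Let M₀ : Ω → [0,∞) be integrable with β = 𝔼(M₀) < 1, let χ₀ : Ω → [0,∞) be a nonnegative random variable with 𝔼(χ₀) < ∞, and set M_k = M₀∘T^k, χ_k = χ₀∘T^k for k ∈ ℤ. Fix ξ > 0 with β + ξ < 1 and let C_{ω,ξ} = sup_{N≥0} [ Π_{k=0}^{N−1} M_{−k} / (β+ξ)^N ]. Then the random variable B_ξ := C_{ω,ξ} Σ_{l=0}^{∞} (β+ξ)^l χ_{−l} + χ₁ is almost surely finite, and for every n ≥ 1, Σ_{l=0}^{n} ( Π_{k=l}^{n−1} M_k ) χ_l ≤ B_ξ ∘ T^{n−1} almost surely (with the empty product Π_{k=n}^{n−1} M_k interpreted as 1). -/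
open MeasureTheory Filter Function Topology

/-- Maximal-ergodic-theorem-based criterion: if `g` is integrable with negative mean and the
system is ergodic, then the Birkhoff sums of `g` are a.s. bounded above. -/
lemma ae_bddAbove_range_birkhoffSum {Ω : Type*} [MeasurableSpace Ω] (μ : Measure Ω)
    [IsProbabilityMeasure μ] (S : Ω → Ω) (hS : Ergodic S μ)
    (g : Ω → ℝ) (hgm : Measurable g) (hgi : Integrable g μ)
    (hneg : ∫ ω, g ω ∂μ < 0) :
    ∀ᵐ ω ∂μ, BddAbove (Set.range fun N : ℕ => ∑ k ∈ Finset.range N, g (S^[k] ω)) := by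
  have hSm : Measurable S := hS.toMeasurePreserving.measurable
  set bS : ℕ → Ω → ℝ := fun N ω => ∑ k ∈ Finset.range N, g (S^[k] ω) with hbS
  have hbSmeas : ∀ N, Measurable (bS N) := fun N =>
    Finset.measurable_sum _ fun k _ => hgm.comp (hSm.iterate k)
  have hbSint : ∀ N, Integrable (bS N) μ := fun N =>
    integrable_finset_sum _ fun k _ =>
      ((hS.toMeasurePreserving.iterate k).integrable_comp hgi.aestronglyMeasurable).2 hgi
  have hbSsucc : ∀ N ω, bS (N + 1) ω = g ω + bS N (S ω) := by
    intro N ω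
    simp only [hbS, Finset.sum_range_succ']
    simp [Function.iterate_succ_apply, add_comm]
  -- the running maxima
  set Φ : ℕ → Ω → ℝ := fun n => Nat.rec (fun _ => (0 : ℝ))
      (fun m ih ω => max (ih ω) (bS (m + 1) ω)) n with hΦ
  have hΦ0 : Φ 0 = fun _ => (0 : ℝ) := rfl
  have hΦsucc : ∀ n ω, Φ (n + 1) ω = max (Φ n ω) (bS (n + 1) ω) := fun n ω => rfl
  have hΦnonneg : ∀ n ω, 0 ≤ Φ n ω := by
    intro n ω
    induction n with
    | zero => simp [hΦ0]
    | succ m ih => rw [hΦsucc]; exact le_max_of_le_left ih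
  have hΦmono : ∀ n ω, Φ n ω ≤ Φ (n + 1) ω := fun n ω => by
    rw [hΦsucc]; exact le_max_left _ _
  have hΦle : ∀ n, ∀ k ≤ n, ∀ ω, bS k ω ≤ Φ n ω := by
    intro n
    induction n with
    | zero => intro k hk ω; interval_cases k; simp [hΦ0, hbS]
    | succ m ih =>
      intro k hk ω
      rcases Nat.lt_or_ge k (m + 1) with h | h
      · exact (ih k (Nat.lt_succ_iff.mp h) ω).trans (hΦmono m ω)
      · have : k = m + 1 := le_antisymm hk h
        subst this
        rw [hΦsucc]; exact le_max_right _ _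
  have hΦexists : ∀ n ω, ∃ k ≤ n, Φ n ω = bS k ω := by
    intro n ω
    induction n with
    | zero => exact ⟨0, le_refl _, by simp [hΦ0, hbS]⟩
    | succ m ih =>
      obtain ⟨k, hk, hke⟩ := ih
      rw [hΦsucc]
      rcases le_total (Φ m ω) (bS (m + 1) ω) with h | h
      · exact ⟨m + 1, le_refl _, by rw [max_eq_right h]⟩
      · exact ⟨k, hk.trans (Nat.le_succ m), by rw [max_eq_left h, hke]⟩
  have hΦmeas : ∀ n, Measurable (Φ n) := by
    intro n
    induction n with
    | zero => rw [hΦ0]; exact measurable_const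
    | succ m ih => exact Measurable.max ih (hbSmeas (m + 1))
  have hΦint : ∀ n, Integrable (Φ n) μ := by
    intro n
    induction n with
    | zero => rw [hΦ0]; exact integrable_const 0
    | succ m ih =>
      have := ih.sup (hbSint (m + 1))
      exact this.congr (Eventually.of_forall fun ω => by rw [hΦsucc]; rfl)
  -- the sets `A n`
  set A : ℕ → Set Ω := fun n => {ω | 0 < Φ (n + 1) ω} with hA
  have hAmeas : ∀ n, MeasurableSet (A n) := fun n =>
    measurableSet_lt measurable_const (hΦmeas (n + 1))
  have hAmono : ∀ n, A n ⊆ A (n + 1) := fun n ω hω => lt_of_lt_of_le hω (hΦmono (n + 1) ω)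
  -- key pointwise inequality
  have hkey : ∀ n ω, Φ (n + 1) ω - Φ n (S ω) ≤ (A n).indicator g ω := by
    intro n ω
    by_cases hω : ω ∈ A n
    · rw [Set.indicator_of_mem hω]
      obtain ⟨k, hk, hke⟩ := hΦexists (n + 1) ω
      have hkpos : k ≠ 0 := by
        intro h0
        subst h0
        have : Φ (n + 1) ω = 0 := by rw [hke]; simp [hbS]
        exact absurd this (by have := hω; simp only [hA, Set.mem_setOf_eq] at this; linarith)
      obtain ⟨j, rfl⟩ := Nat.exists_eq_succ_of_ne_zero hkpos
      have : Φ (n + 1) ω = g ω + bS j (S ω) := by rw [hke, hbSsucc]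
      rw [this]
      have : bS j (S ω) ≤ Φ n (S ω) := hΦle n j (Nat.lt_succ_iff.mp hk) (S ω)
      linarith
    · rw [Set.indicator_of_notMem hω]
      have h1 : Φ (n + 1) ω ≤ 0 := by
        simp only [hA, Set.mem_setOf_eq, not_lt] at hω; exact hω
      have h2 : 0 ≤ Φ n (S ω) := hΦnonneg n (S ω)
      linarith
  -- integrate
  have hint_comp : ∀ n, ∫ ω, Φ n (S ω) ∂μ = ∫ ω, Φ n ω ∂μ := by
    intro n
    conv_rhs => rw [← hS.toMeasurePreserving.map_eq]
    exact (integral_map hSm.aemeasurable (hΦmeas n).aestronglyMeasurable).symm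
  have hmaximal : ∀ n, 0 ≤ ∫ ω, (A n).indicator g ω ∂μ := by
    intro n
    have hintind : Integrable ((A n).indicator g) μ := hgi.indicator (hAmeas n)
    have hintcomp : Integrable (fun ω => Φ n (S ω)) μ :=
      ((hS.toMeasurePreserving.integrable_comp (hΦint n).aestronglyMeasurable).2 (hΦint n))
    have h1 : ∫ ω, (Φ (n + 1) ω - Φ n (S ω)) ∂μ ≤ ∫ ω, (A n).indicator g ω ∂μ :=
      integral_mono ((hΦint (n + 1)).sub hintcomp) hintind (fun ω => hkey n ω)
    rw [integral_sub (hΦint (n + 1)) hintcomp, hint_comp n] at h1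
    have h2 : ∫ ω, Φ n ω ∂μ ≤ ∫ ω, Φ (n + 1) ω ∂μ :=
      integral_mono (hΦint n) (hΦint (n + 1)) (fun ω => hΦmono n ω)
    linarith
  -- the bad set is invariant
  set E : Set Ω := {ω | ¬ BddAbove (Set.range fun N : ℕ => bS N ω)} with hE
  have hEiff : ∀ ω, ω ∈ E ↔ ∀ K : ℕ, ∃ N, (K : ℝ) < bS N ω := by
    intro ω
    simp only [hE, Set.mem_setOf_eq]
    constructor
    · intro h K
      by_contra hcon
      push_neg at hcon
      exact h ⟨(K : ℝ), by rintro x ⟨N, rfl⟩; exact hcon N⟩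
    · rintro h ⟨K, hK⟩
      obtain ⟨N, hN⟩ := h ⌈K⌉₊
      exact absurd (hK (Set.mem_range_self N))
        (by push_neg; exact lt_of_le_of_lt (Nat.le_ceil K) hN)
  have hEmeas : MeasurableSet E := by
    have hEeq : E = ⋂ K : ℕ, ⋃ N : ℕ, {ω | (K : ℝ) < bS N ω} := by
      ext ω
      simp only [Set.mem_iInter, Set.mem_iUnion, Set.mem_setOf_eq]
      exact hEiff ω
    rw [hEeq]
    exact MeasurableSet.iInter fun K => MeasurableSet.iUnion fun N =>
      measurableSet_lt measurable_const (hbSmeas N)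
  have hEinv : S ⁻¹' E = E := by
    ext ω
    simp only [Set.mem_preimage, hE, Set.mem_setOf_eq, not_iff_not]
    constructor
    · rintro ⟨K, hK⟩
      refine ⟨max 0 (K + g ω), ?_⟩
      rintro x ⟨N, rfl⟩
      cases N with
      | zero => show bS 0 ω ≤ _; simp [hbS]
      | succ M =>
        have h1 : bS M (S ω) ≤ K := hK (Set.mem_range_self M)
        have h2 : bS (M + 1) ω = g ω + bS M (S ω) := hbSsucc M ω
        refine le_max_of_le_right ?_
        show bS (M + 1) ω ≤ K + g ω
        rw [h2]; linarith
    · rintro ⟨K, hK⟩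
      refine ⟨K - g ω, ?_⟩
      rintro x ⟨N, rfl⟩
      show bS N (S ω) ≤ K - g ω
      have h1 : bS (N + 1) ω ≤ K := hK (Set.mem_range_self (N + 1))
      have h2 : bS (N + 1) ω = g ω + bS N (S ω) := hbSsucc N ω
      rw [h2] at h1; linarith
  rcases hS.toPreErgodic.measure_self_or_compl_eq_zero hEmeas hEinv with h0 | h1
  · rw [ae_iff]; exact h0
  · exfalso
    set A' : Set Ω := ⋃ n, A n with hAinf
    have hEA : E ⊆ A' := by
      intro ω hω
      obtain ⟨N, hN⟩ := (hEiff ω).mp hω 0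
      simp only [Nat.cast_zero] at hN
      have : 0 < Φ (N + 1) ω := lt_of_lt_of_le hN (hΦle (N + 1) N (Nat.le_succ N) ω)
      exact Set.mem_iUnion.mpr ⟨N, this⟩
    have hAc : μ A'ᶜ = 0 :=
      measure_mono_null (Set.compl_subset_compl.mpr hEA) h1
    have hconv : Tendsto (fun n => ∫ ω, (A n).indicator g ω ∂μ) atTop
        (𝓝 (∫ ω, A'.indicator g ω ∂μ)) := by
      refine tendsto_integral_of_dominated_convergence (fun ω => |g ω|)
        (fun n => (hgm.indicator (hAmeas n)).aestronglyMeasurable)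
        hgi.abs ?_ ?_
      · intro n
        filter_upwards with ω
        rw [Real.norm_eq_abs, ← Real.norm_eq_abs, ← Real.norm_eq_abs]
        exact norm_indicator_le_norm_self g ω
      · filter_upwards with ω
        by_cases hω : ω ∈ A'
        · obtain ⟨n₀, hn₀⟩ := Set.mem_iUnion.mp hω
          rw [Set.indicator_of_mem hω]
          refine tendsto_const_nhds.congr' ?_
          filter_upwards [eventually_ge_atTop n₀] with n hn
          have : ω ∈ A n := by
            obtain ⟨d, rfl⟩ := Nat.exists_eq_add_of_le hn
            clear hn
            induction d with
            | zero => exact hn₀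
            | succ d ih => exact hAmono _ ih
          rw [Set.indicator_of_mem this]
        · have : ∀ n, ω ∉ A n := fun n h => hω (Set.mem_iUnion.mpr ⟨n, h⟩)
          rw [Set.indicator_of_notMem hω]
          refine tendsto_const_nhds.congr fun n => ?_
          rw [Set.indicator_of_notMem (this n)]
    have hge : 0 ≤ ∫ ω, A'.indicator g ω ∂μ :=
      ge_of_tendsto' hconv hmaximal
    have heq : ∫ ω, A'.indicator g ω ∂μ = ∫ ω, g ω ∂μ := by
      refine integral_congr_ae ?_
      filter_upwards [measure_eq_zero_iff_ae_notMem.mp hAc] with ω hω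
      rw [Set.indicator_of_mem (not_not.mp hω)]
    rw [heq] at hge
    linarith

/-- Deterministic pointwise computation for the accumulated error sum. -/
lemma pointwise_sum_le {Ω : Type*} (T : Equiv.Perm Ω) (M₀ χ₀ : Ω → ℝ)
    (hM₀ : ∀ ω, 0 ≤ M₀ ω) (hχ₀ : ∀ ω, 0 ≤ χ₀ ω) (c : ℝ) (hc0 : 0 < c) (hc1 : c ≤ 1)
    (ω : Ω) (m : ℕ)
    (hsum : Summable fun l : ℕ => c ^ l * χ₀ ((⇑T.symm)^[l] ((⇑T)^[m] ω)))
    (hbdd : BddAbove (Set.range fun N : ℕ =>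
      (∏ k ∈ Finset.range N, M₀ ((⇑T.symm)^[k] ((⇑T)^[m] ω))) / c ^ N)) :
    ∑ l ∈ Finset.range (m + 2), (∏ k ∈ Finset.Ico l (m + 1), M₀ ((⇑T)^[k] ω)) * χ₀ ((⇑T)^[l] ω)
      ≤ (⨆ N : ℕ, (∏ k ∈ Finset.range N, M₀ ((⇑T.symm)^[k] ((⇑T)^[m] ω))) / c ^ N) *
          (∑' l : ℕ, c ^ l * χ₀ ((⇑T.symm)^[l] ((⇑T)^[m] ω))) + χ₀ (T ((⇑T)^[m] ω)) := by
  set ω' : Ω := (⇑T)^[m] ω with hω'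
  have hinv : ∀ j ≤ m, (⇑T.symm)^[j] ω' = (⇑T)^[m - j] ω := by
    intro j hj
    have h1 : ω' = (⇑T)^[j] ((⇑T)^[m - j] ω) := by
      rw [hω', ← Function.iterate_add_apply]
      congr 1
      omega
    have h2 : Function.LeftInverse ((⇑T.symm)^[j]) ((⇑T)^[j]) :=
      Function.LeftInverse.iterate T.symm_apply_apply j
    rw [h1, h2]
  set P : ℕ → ℝ := fun N => ∏ k ∈ Finset.range N, M₀ ((⇑T.symm)^[k] ω') with hP
  set C' : ℝ := ⨆ N : ℕ, P N / c ^ N with hC'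
  have hC1 : (1 : ℝ) ≤ C' := by
    have := le_ciSup hbdd 0
    simpa [hP] using this
  have hC0 : (0 : ℝ) ≤ C' := le_trans zero_le_one hC1
  have hPle : ∀ N, P N ≤ C' * c ^ N := by
    intro N
    have := le_ciSup hbdd N
    rw [div_le_iff₀ (pow_pos hc0 N)] at this
    exact this
  rw [Finset.sum_range_succ]
  have hlast : (∏ k ∈ Finset.Ico (m + 1) (m + 1), M₀ ((⇑T)^[k] ω)) * χ₀ ((⇑T)^[m + 1] ω)
      = χ₀ (T ω') := by
    rw [Finset.Ico_self, Finset.prod_empty, one_mul, Function.iterate_succ_apply']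
  rw [hlast]
  have hterm : ∀ l ∈ Finset.range (m + 1),
      (∏ k ∈ Finset.Ico l (m + 1), M₀ ((⇑T)^[k] ω)) * χ₀ ((⇑T)^[l] ω)
        = P (m - l + 1) * χ₀ ((⇑T.symm)^[m - l] ω') := by
    intro l hl
    have hlm : l ≤ m := Nat.lt_succ_iff.mp (Finset.mem_range.mp hl)
    have e1 : ∏ k ∈ Finset.Ico l (m + 1), M₀ ((⇑T)^[k] ω)
        = ∏ j ∈ Finset.range (m + 1 - l), M₀ ((⇑T)^[l + j] ω) :=
      Finset.prod_Ico_eq_prod_range _ _ _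
    have e2 : ∏ j ∈ Finset.range (m + 1 - l), M₀ ((⇑T)^[l + j] ω)
        = ∏ j ∈ Finset.range (m + 1 - l), M₀ ((⇑T.symm)^[m + 1 - l - 1 - j] ω') := by
      refine Finset.prod_congr rfl fun j hj => ?_
      have hjl : j ≤ m - l := by
        have := Finset.mem_range.mp hj
        omega
      rw [hinv (m + 1 - l - 1 - j) (by omega)]
      congr 2
      omega
    have e3 : ∏ j ∈ Finset.range (m + 1 - l), M₀ ((⇑T.symm)^[m + 1 - l - 1 - j] ω')
        = P (m + 1 - l) :=
      Finset.prod_range_reflect (fun j => M₀ ((⇑T.symm)^[j] ω')) (m + 1 - l)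
    have e4 : χ₀ ((⇑T)^[l] ω) = χ₀ ((⇑T.symm)^[m - l] ω') := by
      rw [hinv (m - l) (by omega)]
      congr 2
      omega
    rw [e1, e2, e3, e4]
    congr 2
    omega
  rw [Finset.sum_congr rfl hterm]
  have hreflect : ∑ l ∈ Finset.range (m + 1), P (m - l + 1) * χ₀ ((⇑T.symm)^[m - l] ω')
      = ∑ i ∈ Finset.range (m + 1), P (i + 1) * χ₀ ((⇑T.symm)^[i] ω') := by
    have := Finset.sum_range_reflect
      (fun i => P (i + 1) * χ₀ ((⇑T.symm)^[i] ω')) (m + 1)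
    simpa using this
  rw [hreflect]
  have hbound : ∑ i ∈ Finset.range (m + 1), P (i + 1) * χ₀ ((⇑T.symm)^[i] ω')
      ≤ C' * ∑' l : ℕ, c ^ l * χ₀ ((⇑T.symm)^[l] ω') := by
    calc ∑ i ∈ Finset.range (m + 1), P (i + 1) * χ₀ ((⇑T.symm)^[i] ω')
        ≤ ∑ i ∈ Finset.range (m + 1), C' * (c ^ i * χ₀ ((⇑T.symm)^[i] ω')) := by
          refine Finset.sum_le_sum fun i _ => ?_
          have h1 : P (i + 1) ≤ C' * c ^ i := by
            refine (hPle (i + 1)).trans ?_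
            have : c ^ (i + 1) ≤ c ^ i :=
              pow_le_pow_of_le_one hc0.le hc1 (Nat.le_succ i)
            exact mul_le_mul_of_nonneg_left this hC0
          calc P (i + 1) * χ₀ ((⇑T.symm)^[i] ω')
              ≤ (C' * c ^ i) * χ₀ ((⇑T.symm)^[i] ω') :=
                mul_le_mul_of_nonneg_right h1 (hχ₀ _)
            _ = C' * (c ^ i * χ₀ ((⇑T.symm)^[i] ω')) := by ring
      _ = C' * ∑ i ∈ Finset.range (m + 1), c ^ i * χ₀ ((⇑T.symm)^[i] ω') := by
          rw [Finset.mul_sum]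
      _ ≤ C' * ∑' l : ℕ, c ^ l * χ₀ ((⇑T.symm)^[l] ω') := by
          refine mul_le_mul_of_nonneg_left ?_ hC0
          exact Summable.sum_le_tsum _ (fun i _ => mul_nonneg (pow_nonneg hc0.le i) (hχ₀ _)) hsum
  linarith

/-- Stationary bound for the accumulated error sum: with `M_k = M₀ ∘ T^k`, `χ_k = χ₀ ∘ T^k`,
`β = 𝔼 M₀ < 1`, `ξ > 0` with `β + ξ < 1`,
`C_{ω,ξ} = sup_N Π_{k=0}^{N-1} M_{-k}/(β+ξ)^N` and
`B_ξ = C_{ω,ξ} Σ_{l=0}^∞ (β+ξ)^l χ_{-l} + χ₁`, the random variable `B_ξ` is a.s. finite and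
`Σ_{l=0}^{n} (Π_{k=l}^{n-1} M_k) χ_l ≤ B_ξ ∘ T^{n-1}` a.s. for every `n ≥ 1`. -/
theorem stationary_bound_accumulated_error_sum
    {Ω : Type*} [MeasurableSpace Ω] (μ : Measure Ω) [IsProbabilityMeasure μ]
    (T : Equiv.Perm Ω)
    (hT : MeasurePreserving T μ μ)
    (hTerg : Ergodic (⇑T) μ) (hTinvErg : Ergodic (⇑T.symm) μ)
    (M₀ : Ω → ℝ) (hM₀meas : Measurable M₀) (hM₀nonneg : ∀ ω, 0 ≤ M₀ ω)
    (hM₀int : Integrable M₀ μ)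
    (χ₀ : Ω → ℝ) (hχ₀meas : Measurable χ₀) (hχ₀nonneg : ∀ ω, 0 ≤ χ₀ ω)
    (hχ₀int : Integrable χ₀ μ)
    (β : ℝ) (hβ : β = ∫ ω, M₀ ω ∂μ) (hβlt : β < 1)
    (ξ : ℝ) (hξ : 0 < ξ) (hβξ : β + ξ < 1)
    (C : Ω → ℝ)
    (hC : ∀ ω, C ω =
      ⨆ N : ℕ, (∏ k ∈ Finset.range N, M₀ ((⇑T.symm)^[k] ω)) / (β + ξ) ^ N)
    (B : Ω → ℝ)
    (hB : ∀ ω, B ω =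
      C ω * ∑' l : ℕ, (β + ξ) ^ l * χ₀ ((⇑T.symm)^[l] ω) + χ₀ (T ω)) :
    ∀ᵐ ω ∂μ,
      Summable (fun l : ℕ => (β + ξ) ^ l * χ₀ ((⇑T.symm)^[l] ω)) ∧
      BddAbove (Set.range fun N : ℕ =>
        (∏ k ∈ Finset.range N, M₀ ((⇑T.symm)^[k] ω)) / (β + ξ) ^ N) ∧
      ∀ n : ℕ, 1 ≤ n →
        ∑ l ∈ Finset.range (n + 1),
            (∏ k ∈ Finset.Ico l n, M₀ ((⇑T)^[k] ω)) * χ₀ ((⇑T)^[l] ω)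
          ≤ B ((⇑T)^[n - 1] ω) := by
  have hβ0 : 0 ≤ β := hβ ▸ integral_nonneg hM₀nonneg
  have hc0 : 0 < β + ξ := by linarith
  have hS := hTinvErg.toMeasurePreserving
  have hSm : Measurable ⇑T.symm := hS.measurable
  -- Part 1 : a.e. summability
  have hχint' : ∫⁻ ω, ENNReal.ofReal (χ₀ ω) ∂μ ≠ ⊤ := hχ₀int.lintegral_lt_top.ne
  have hmeasl : ∀ l : ℕ,
      Measurable fun ω => ENNReal.ofReal ((β + ξ) ^ l * χ₀ ((⇑T.symm)^[l] ω)) := fun l =>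
    ENNReal.measurable_ofReal.comp ((hχ₀meas.comp (hSm.iterate l)).const_mul _)
  have hkey : ∫⁻ ω, ∑' l : ℕ, ENNReal.ofReal ((β + ξ) ^ l * χ₀ ((⇑T.symm)^[l] ω)) ∂μ ≠ ⊤ := by
    rw [lintegral_tsum fun l => (hmeasl l).aemeasurable]
    have heach : ∀ l : ℕ, ∫⁻ ω, ENNReal.ofReal ((β + ξ) ^ l * χ₀ ((⇑T.symm)^[l] ω)) ∂μ
        = ENNReal.ofReal (β + ξ) ^ l * ∫⁻ ω, ENNReal.ofReal (χ₀ ω) ∂μ := by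
      intro l
      have hrw : ∀ ω : Ω, ENNReal.ofReal ((β + ξ) ^ l * χ₀ ((⇑T.symm)^[l] ω))
          = ENNReal.ofReal (β + ξ) ^ l * ENNReal.ofReal (χ₀ ((⇑T.symm)^[l] ω)) := fun ω => by
        rw [ENNReal.ofReal_mul (pow_nonneg hc0.le l), ENNReal.ofReal_pow hc0.le]
      simp_rw [hrw]
      rw [lintegral_const_mul' _ _ (ENNReal.pow_ne_top ENNReal.ofReal_ne_top)]
      congr 1
      exact (hS.iterate l).lintegral_comp (ENNReal.measurable_ofReal.comp hχ₀meas)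
    simp_rw [heach]
    rw [ENNReal.tsum_mul_right, ENNReal.tsum_geometric]
    refine ENNReal.mul_ne_top (ENNReal.inv_ne_top.2 ?_) hχint'
    simpa [tsub_eq_zero_iff_le, not_le] using ENNReal.ofReal_lt_one.2 hβξ
  have hsum_ae : ∀ᵐ ω ∂μ, Summable fun l : ℕ => (β + ξ) ^ l * χ₀ ((⇑T.symm)^[l] ω) := by
    filter_upwards [ae_lt_top (Measurable.ennreal_tsum hmeasl) hkey] with ω hω
    exact (ENNReal.summable_toReal hω.ne).congr fun l =>
      ENNReal.toReal_ofReal (mul_nonneg (pow_nonneg hc0.le l) (hχ₀nonneg _))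
  -- Part 2 : a.e. bounded above
  have hneg : ∫ ω, (M₀ ω - (β + ξ)) ∂μ < 0 := by
    rw [integral_sub hM₀int (integrable_const _), integral_const]
    simp only [probReal_univ, smul_eq_mul, one_mul]
    rw [← hβ]
    linarith
  have hbb := ae_bddAbove_range_birkhoffSum μ (⇑T.symm) hTinvErg
    (fun ω => M₀ ω - (β + ξ)) (hM₀meas.sub measurable_const)
    (hM₀int.sub (integrable_const _)) hneg
  have hbdd_ae : ∀ᵐ ω ∂μ, BddAbove (Set.range fun N : ℕ =>
      (∏ k ∈ Finset.range N, M₀ ((⇑T.symm)^[k] ω)) / (β + ξ) ^ N) := by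
    filter_upwards [hbb] with ω hω
    obtain ⟨K, hK⟩ := hω
    have hK' : ∀ N : ℕ, ∑ k ∈ Finset.range N, (M₀ ((⇑T.symm)^[k] ω) - (β + ξ)) ≤ K :=
      fun N => hK (Set.mem_range_self N)
    refine ⟨Real.exp (K / (β + ξ)), ?_⟩
    rintro x ⟨N, rfl⟩
    show (∏ k ∈ Finset.range N, M₀ ((⇑T.symm)^[k] ω)) / (β + ξ) ^ N ≤ Real.exp (K / (β + ξ))
    rw [div_le_iff₀ (pow_pos hc0 N)]
    calc ∏ k ∈ Finset.range N, M₀ ((⇑T.symm)^[k] ω)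
        ≤ ∏ k ∈ Finset.range N,
            ((β + ξ) * Real.exp (M₀ ((⇑T.symm)^[k] ω) / (β + ξ) - 1)) := by
          refine Finset.prod_le_prod (fun k _ => hM₀nonneg _) fun k _ => ?_
          set a : ℝ := M₀ ((⇑T.symm)^[k] ω) with ha
          have h1 : a / (β + ξ) ≤ Real.exp (a / (β + ξ) - 1) := by
            have := Real.add_one_le_exp (a / (β + ξ) - 1)
            linarith
          calc a = (β + ξ) * (a / (β + ξ)) := by field_simp
            _ ≤ (β + ξ) * Real.exp (a / (β + ξ) - 1) :=
              mul_le_mul_of_nonneg_left h1 hc0.le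
      _ = (β + ξ) ^ N *
          Real.exp (∑ k ∈ Finset.range N, (M₀ ((⇑T.symm)^[k] ω) / (β + ξ) - 1)) := by
          rw [Finset.prod_mul_distrib, Finset.prod_const, Real.exp_sum, Finset.card_range]
      _ ≤ (β + ξ) ^ N * Real.exp (K / (β + ξ)) := by
          refine mul_le_mul_of_nonneg_left (Real.exp_le_exp.2 ?_) (pow_nonneg hc0.le N)
          have hsd : ∑ k ∈ Finset.range N, (M₀ ((⇑T.symm)^[k] ω) / (β + ξ) - 1)
              = (∑ k ∈ Finset.range N, (M₀ ((⇑T.symm)^[k] ω) - (β + ξ))) / (β + ξ) := by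
            rw [Finset.sum_div]
            refine Finset.sum_congr rfl fun k _ => ?_
            field_simp
          rw [hsd]
          gcongr
          exact hK' N
      _ = Real.exp (K / (β + ξ)) * (β + ξ) ^ N := mul_comm _ _
  -- combine and pull back along the iterates of `T`
  have hG := hsum_ae.and hbdd_ae
  have hall : ∀ᵐ ω ∂μ, ∀ m : ℕ,
      (Summable fun l : ℕ => (β + ξ) ^ l * χ₀ ((⇑T.symm)^[l] ((⇑T)^[m] ω))) ∧
      BddAbove (Set.range fun N : ℕ =>
        (∏ k ∈ Finset.range N, M₀ ((⇑T.symm)^[k] ((⇑T)^[m] ω))) / (β + ξ) ^ N) := by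
    rw [ae_all_iff]
    intro m
    exact ((hT.iterate m).quasiMeasurePreserving.tendsto_ae).eventually hG
  filter_upwards [hG, hall] with ω hω hωall
  refine ⟨hω.1, hω.2, ?_⟩
  intro n hn
  obtain ⟨m, rfl⟩ : ∃ m, n = m + 1 := ⟨n - 1, by omega⟩
  simp only [Nat.add_sub_cancel]
  rw [hB, hC]
  exact pointwise_sum_le T M₀ χ₀ hM₀nonneg hχ₀nonneg (β + ξ) hc0 hβξ.le ω m
    (hωall m).1 (hωall m).2
end

section
/- Characterization of the observability property. Let H = ℝ^d with the Euclidean inner product (·,·) and norm |·|, let B : H × H → H be a symmetric bilinear map satisfying (B(U,U),U) = 0 for all U and |B(U,V)| ≤ a₁|U||V| for all U, V and some constant a₁ > 0, and let P be an orthogonal projection on H with Q = I − P. Then the property 'B(QU,QU) = 0 for all U ∈ H' holds if and only if there exists a constant b > 0 such that 2|(B(U,V),V)| ≤ b·|PV|·|U|·|V| for all U, V ∈ H; moreover in the forward direction one may take b = 3a₁. -/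
open scoped InnerProductSpace

/-- Characterization of the observability property: for a symmetric, energy-conserving,
bounded bilinear map `B` on `ℝ^d` and an orthogonal projection `P` with `Q = I - P`,
the property `B(QU,QU) = 0` for all `U` holds iff there is `b > 0` with
`2|(B(U,V),V)| ≤ b|PV||U||V|` for all `U,V`; in the forward direction one may take
`b = 3a₁`. -/
theorem observability_characterization
    {d : ℕ}
    (B : EuclideanSpace ℝ (Fin d) →ₗ[ℝ] EuclideanSpace ℝ (Fin d) →ₗ[ℝ] EuclideanSpace ℝ (Fin d))
    (hsymm : ∀ U V, B U V = B V U)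
    (henergy : ∀ U, ⟪B U U, U⟫_ℝ = 0)
    (a₁ : ℝ) (ha₁ : 0 < a₁)
    (hbound : ∀ U V, ‖B U V‖ ≤ a₁ * ‖U‖ * ‖V‖)
    (P : EuclideanSpace ℝ (Fin d) →ₗ[ℝ] EuclideanSpace ℝ (Fin d))
    (hPproj : ∀ x, P (P x) = P x)
    (hPsa : ∀ x y, ⟪P x, y⟫_ℝ = ⟪x, P y⟫_ℝ) :
    ((∀ U, B (U - P U) (U - P U) = 0) ↔
      ∃ b > (0 : ℝ), ∀ U V, 2 * |⟪B U V, V⟫_ℝ| ≤ b * ‖P V‖ * ‖U‖ * ‖V‖) ∧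
    ((∀ U, B (U - P U) (U - P U) = 0) →
      ∀ U V, 2 * |⟪B U V, V⟫_ℝ| ≤ 3 * a₁ * ‖P V‖ * ‖U‖ * ‖V‖) := by
  -- polarization identity: ⟪B x x, y⟫ + 2⟪B x y, x⟫ = 0
  have key : ∀ x y, ⟪B x x, y⟫_ℝ + 2 * ⟪B x y, x⟫_ℝ = 0 := by
    intro x y
    have h1 := henergy (x + y)
    have h2 := henergy (x - y)
    simp only [map_add, map_sub, LinearMap.add_apply, LinearMap.sub_apply,
      inner_add_left, inner_sub_left, inner_add_right, inner_sub_right] at h1 h2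
    rw [hsymm x y] at h1 h2 ⊢
    linarith [henergy x, henergy y]
  -- ⟪x, P x⟫ = ‖P x‖ ^ 2
  have hinner : ∀ x, ⟪x, P x⟫_ℝ = ‖P x‖ ^ 2 := by
    intro x
    have : ⟪P x, P x⟫_ℝ = ⟪x, P (P x)⟫_ℝ := hPsa x (P x)
    rw [hPproj] at this
    rw [← this, real_inner_self_eq_norm_sq]
  have hPle : ∀ x, ‖P x‖ ≤ ‖x‖ := by
    intro x
    have h1 := real_inner_le_norm x (P x)
    rw [hinner x] at h1
    nlinarith [norm_nonneg (P x), norm_nonneg x]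
  have hQle : ∀ x, ‖x - P x‖ ≤ ‖x‖ := by
    intro x
    have h1 : ‖x - P x‖ ^ 2 = ‖x‖ ^ 2 - 2 * ⟪x, P x⟫_ℝ + ‖P x‖ ^ 2 := by
      rw [@norm_sub_sq_real]
    rw [hinner x] at h1
    nlinarith [norm_nonneg (x - P x), norm_nonneg x, sq_nonneg (‖P x‖)]
  -- forward direction with b = 3a₁
  have fw : (∀ U, B (U - P U) (U - P U) = 0) →
      ∀ U V, 2 * |⟪B U V, V⟫_ℝ| ≤ 3 * a₁ * ‖P V‖ * ‖U‖ * ‖V‖ := by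
    intro h0 U V
    have hq : 2 * ⟪B U V, V⟫_ℝ = -⟪B V V, U⟫_ℝ := by
      have := key V U
      rw [hsymm V U] at this
      linarith
    have habs : 2 * |⟪B U V, V⟫_ℝ| = |⟪B V V, U⟫_ℝ| := by
      have : |2 * ⟪B U V, V⟫_ℝ| = |⟪B V V, U⟫_ℝ| := by rw [hq, abs_neg]
      rw [abs_mul] at this
      simpa using this
    have hV : P V + (V - P V) = V := by abel
    have hd : B V V = B (P V) (P V) + B (P V) (V - P V) + B (V - P V) (P V) := by
      calc B V V = B (P V + (V - P V)) (P V + (V - P V)) := by rw [hV]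
        _ = B (P V) (P V) + B (P V) (V - P V) + (B (V - P V) (P V)
              + B (V - P V) (V - P V)) := by
            simp only [map_add, LinearMap.add_apply]; abel
        _ = B (P V) (P V) + B (P V) (V - P V) + B (V - P V) (P V) := by
            rw [h0 V, add_zero]
    have hn : ‖B V V‖ ≤ 3 * a₁ * ‖P V‖ * ‖V‖ := by
      have h1 : ‖B V V‖ ≤ ‖B (P V) (P V)‖ + ‖B (P V) (V - P V)‖
          + ‖B (V - P V) (P V)‖ := by
        rw [hd]; exact norm_add₃_le
      have b1 := hbound (P V) (P V)
      have b2 := hbound (P V) (V - P V)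
      have b3 := hbound (V - P V) (P V)
      have := hPle V
      have := hQle V
      nlinarith [norm_nonneg (P V), norm_nonneg V, norm_nonneg (V - P V),
        mul_nonneg (le_of_lt ha₁) (norm_nonneg (P V))]
    have hcs := abs_real_inner_le_norm (B V V) U
    rw [habs]
    calc |⟪B V V, U⟫_ℝ| ≤ ‖B V V‖ * ‖U‖ := hcs
      _ ≤ 3 * a₁ * ‖P V‖ * ‖U‖ * ‖V‖ := by
          nlinarith [norm_nonneg U, norm_nonneg (B V V), norm_nonneg V,
            mul_nonneg (mul_nonneg (by positivity : (0:ℝ) ≤ 3 * a₁) (norm_nonneg (P V))) (norm_nonneg V)]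
  refine ⟨⟨fun h0 => ⟨3 * a₁, by positivity, fun U V => by
      have := fw h0 U V; linarith⟩, ?_⟩, fw⟩
  rintro ⟨b, hb, hbd⟩ U
  set x := U - P U with hx
  have hPx : P x = 0 := by
    rw [hx, map_sub, hPproj, sub_self]
  have hz : ∀ W, ⟪B x W, x⟫_ℝ = 0 := by
    intro W
    have h1 := hbd W x
    rw [hPx, norm_zero] at h1
    rw [hsymm W x] at h1
    have h2 : b * 0 * ‖W‖ * ‖x‖ = 0 := by ring
    rw [h2] at h1
    have := abs_nonneg (⟪B x W, x⟫_ℝ)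
    have : |⟪B x W, x⟫_ℝ| = 0 := by linarith
    exact abs_eq_zero.mp this
  have hmain : ⟪B x x, B x x⟫_ℝ = 0 := by
    have := key x (B x x)
    rw [hz (B x x)] at this
    linarith
  exact inner_self_eq_zero.mp hmain
end

section
/- Exponential growth bound on the error between two solutions. Let U, u : [t₀, t₁] → ℝ^d be differentiable solutions of dV/dt + AV + B(V,V) = f, where A is linear with (AV,V) ≥ |V|² for all V, B is a symmetric bilinear map with (B(V,V),V) = 0 for all V and |B(V,W)| ≤ a₁|V||W| for all V, W and some a₁ > 0, and f ∈ ℝ^d is constant. Suppose |U(t)| ≤ K^{1/2} for all t ∈ [t₀,t₁] for some K > 0. Then the difference δ(t) = U(t) − u(t) satisfies |δ(t)|² ≤ e^{κ(t−t₀)}|δ(t₀)|² for all t ∈ [t₀,t₁], where κ = 2(2a₁K^{1/2} − 1). -/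
open scoped InnerProductSpace

/-- Exponential growth bound on the error between two solutions of
`dV/dt + AV + B(V,V) = f`: if `|U(t)| ≤ K^{1/2}` on `[t₀,t₁]`, then the difference
`δ = U − u` satisfies `|δ(t)|² ≤ e^{κ(t−t₀)}|δ(t₀)|²` with `κ = 2(2a₁K^{1/2} − 1)`. -/
theorem exponential_error_growth_bound
    {d : ℕ}
    (A : EuclideanSpace ℝ (Fin d) →ₗ[ℝ] EuclideanSpace ℝ (Fin d))
    (hA : ∀ V, ‖V‖ ^ 2 ≤ ⟪A V, V⟫_ℝ)
    (B : EuclideanSpace ℝ (Fin d) →ₗ[ℝ] EuclideanSpace ℝ (Fin d) →ₗ[ℝ] EuclideanSpace ℝ (Fin d))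
    (hsymm : ∀ V W, B V W = B W V)
    (henergy : ∀ V, ⟪B V V, V⟫_ℝ = 0)
    (a₁ : ℝ) (ha₁ : 0 < a₁)
    (hbound : ∀ V W, ‖B V W‖ ≤ a₁ * ‖V‖ * ‖W‖)
    (f : EuclideanSpace ℝ (Fin d))
    (t₀ t₁ : ℝ) (ht : t₀ ≤ t₁)
    (U u : ℝ → EuclideanSpace ℝ (Fin d))
    (hU : ∀ t ∈ Set.Icc t₀ t₁,
      HasDerivWithinAt U (f - A (U t) - B (U t) (U t)) (Set.Icc t₀ t₁) t)
    (hu : ∀ t ∈ Set.Icc t₀ t₁,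
      HasDerivWithinAt u (f - A (u t) - B (u t) (u t)) (Set.Icc t₀ t₁) t)
    (K : ℝ) (hK : 0 < K)
    (hUK : ∀ t ∈ Set.Icc t₀ t₁, ‖U t‖ ≤ Real.sqrt K)
    (κ : ℝ) (hκ : κ = 2 * (2 * a₁ * Real.sqrt K - 1)) :
    ∀ t ∈ Set.Icc t₀ t₁,
      ‖U t - u t‖ ^ 2 ≤ Real.exp (κ * (t - t₀)) * ‖U t₀ - u t₀‖ ^ 2 := by
  set δ : ℝ → EuclideanSpace ℝ (Fin d) := fun t => U t - u t with hδdef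
  set D : ℝ → EuclideanSpace ℝ (Fin d) := fun t =>
    (f - A (U t) - B (U t) (U t)) - (f - A (u t) - B (u t) (u t)) with hDdef
  have hδ : ∀ t ∈ Set.Icc t₀ t₁, HasDerivWithinAt δ (D t) (Set.Icc t₀ t₁) t :=
    fun t htt => (hU t htt).sub (hu t htt)
  set g : ℝ → ℝ := fun t => ⟪δ t, δ t⟫_ℝ with hgdef
  set g' : ℝ → ℝ := fun t => ⟪δ t, D t⟫_ℝ + ⟪D t, δ t⟫_ℝ with hg'def
  have hg : ∀ t ∈ Set.Icc t₀ t₁, HasDerivWithinAt g (g' t) (Set.Icc t₀ t₁) t :=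
    fun t htt => (hδ t htt).inner ℝ (hδ t htt)
  have hgnorm : ∀ t, g t = ‖δ t‖ ^ 2 := fun t => real_inner_self_eq_norm_sq _
  -- the key differential inequality
  have key : ∀ t ∈ Set.Icc t₀ t₁, g' t ≤ κ * g t + 0 := by
    intro t htt
    have hBdiff : B (U t) (U t) - B (u t) (u t)
        = (2 : ℝ) • B (U t) (δ t) - B (δ t) (δ t) := by
      simp only [hδdef, map_sub, LinearMap.sub_apply, two_smul, smul_add]
      rw [hsymm (u t) (U t)]
      module
    have hD : D t = -(A (δ t)) - ((2 : ℝ) • B (U t) (δ t) - B (δ t) (δ t)) := by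
      have h0 : D t = -(A (U t) - A (u t)) - (B (U t) (U t) - B (u t) (u t)) := by
        simp only [hDdef]; abel
      rw [h0, hBdiff]
      simp only [hδdef, map_sub]
    have hinner : ⟪D t, δ t⟫_ℝ
        = -⟪A (δ t), δ t⟫_ℝ - 2 * ⟪B (U t) (δ t), δ t⟫_ℝ := by
      rw [hD]
      rw [inner_sub_left, inner_neg_left, inner_sub_left, real_inner_smul_left,
        henergy (δ t)]
      ring
    have hB1 : |⟪B (U t) (δ t), δ t⟫_ℝ| ≤ a₁ * Real.sqrt K * ‖δ t‖ ^ 2 := by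
      calc |⟪B (U t) (δ t), δ t⟫_ℝ| ≤ ‖B (U t) (δ t)‖ * ‖δ t‖ :=
            abs_real_inner_le_norm _ _
        _ ≤ (a₁ * ‖U t‖ * ‖δ t‖) * ‖δ t‖ := by
            apply mul_le_mul_of_nonneg_right (hbound _ _) (norm_nonneg _)
        _ ≤ a₁ * Real.sqrt K * ‖δ t‖ ^ 2 := by
            have h1 : a₁ * ‖U t‖ ≤ a₁ * Real.sqrt K :=
              mul_le_mul_of_nonneg_left (hUK t htt) ha₁.le
            have h2 : (0:ℝ) ≤ ‖δ t‖ * ‖δ t‖ :=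
              mul_nonneg (norm_nonneg _) (norm_nonneg _)
            calc a₁ * ‖U t‖ * ‖δ t‖ * ‖δ t‖ = (a₁ * ‖U t‖) * (‖δ t‖ * ‖δ t‖) := by ring
              _ ≤ (a₁ * Real.sqrt K) * (‖δ t‖ * ‖δ t‖) :=
                  mul_le_mul_of_nonneg_right h1 h2
              _ = a₁ * Real.sqrt K * ‖δ t‖ ^ 2 := by ring
    have hAle : -⟪A (δ t), δ t⟫_ℝ ≤ -‖δ t‖ ^ 2 := neg_le_neg (hA (δ t))
    have hDδ : ⟪D t, δ t⟫_ℝ ≤ (2 * a₁ * Real.sqrt K - 1) * ‖δ t‖ ^ 2 := by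
      rw [hinner]
      have := (abs_le.mp hB1).1
      nlinarith
    have hsym2 : ⟪δ t, D t⟫_ℝ = ⟪D t, δ t⟫_ℝ := real_inner_comm _ _
    rw [hg'def]
    simp only [hsym2]
    rw [hκ, hgnorm t, add_zero]
    nlinarith
  have hmain := le_gronwallBound_of_liminf_deriv_right_le
    (f := g) (f' := g') (δ := g t₀) (K := κ) (ε := 0) (a := t₀) (b := t₁)
    (fun t htt => (hg t htt).continuousWithinAt)
    (fun x hx r hr => by
      have hx' : x ∈ Set.Icc t₀ t₁ := Set.Ico_subset_Icc_self hx
      have h1 : HasDerivWithinAt g (g' x) (Set.Ici x) x :=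
        (hg x hx').mono_of_mem_nhdsWithin
          (Filter.mem_of_superset (Icc_mem_nhdsGE_of_mem ⟨le_rfl, hx.2⟩)
            (Set.Icc_subset_Icc hx.1 le_rfl))
      have := h1.liminf_right_slope_le hr
      refine this.mono fun z hz => ?_
      simpa [slope_def_field, div_eq_inv_mul] using hz)
    le_rfl (fun x hx => key x (Set.Ico_subset_Icc_self hx))
  intro t htt
  have := hmain t htt
  rw [gronwallBound_ε0] at this
  rw [hgnorm, hgnorm] at this
  calc ‖U t - u t‖ ^ 2 = ‖δ t‖ ^ 2 := rfl
    _ ≤ ‖δ t₀‖ ^ 2 * Real.exp (κ * (t - t₀)) := this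
    _ = Real.exp (κ * (t - t₀)) * ‖U t₀ - u t₀‖ ^ 2 := by rw [mul_comm]
end

section
/- Squeezing estimate for finite-dimensional dissipative quadratic systems. Let U, u : [t₀, t₁] → ℝ^d be differentiable solutions of dV/dt + AV + B(V,V) = f, where A is linear with (AV,V) ≥ |V|² for all V and (AV,PV) ≥ a₂|PV|² − a₃|V|² for all V (a₂ > 0, a₃ ≥ 0); B is a symmetric bilinear map with (B(V,V),V) = 0, |B(V,W)| ≤ a₁|V||W| for some a₁ > 0, and B(QV,QV) = 0 for all V; f ∈ ℝ^d is constant; P is an orthogonal projection with Q = I − P. Suppose |U(t)| ≤ K^{1/2} on [t₀,t₁] for some K > 0, t₁ − t₀ ≤ h, and |δ(t₀)|² ≤ ρ where δ = U − u. Then for all t ∈ [t₀,t₁], |δ(t)|² ≤ M(t−t₀, ρ)·|δ(t₀)|² + γ(t−t₀)·|Pδ(t₀)|², where M(τ,ρ) = e^{−τ}(1 + a₆(a₄ + a₅ρ^{1/2}) ∫₀^τ s e^s ds), γ(τ) = a₆(1 − e^{−τ}), with b = 3a₁, a₆ = b²K, κ = 2(2a₁K^{1/2} − 1), a₄ = 2e^{κh}(a₁²K/a₂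 + a₃), a₅ = 2a₁e^{3κh/2}. -/
open scoped InnerProductSpace

set_option maxHeartbeats 0

lemma derivCompare {c d : ℝ} {f g f' g' : ℝ → ℝ}
    (hf : ∀ t ∈ Set.Icc c d, HasDerivWithinAt f (f' t) (Set.Icc c d) t)
    (hg : ∀ t ∈ Set.Icc c d, HasDerivWithinAt g (g' t) (Set.Icc c d) t)
    (h0 : f c ≤ g c)
    (hle : ∀ t ∈ Set.Icc c d, f' t ≤ g' t) :
    ∀ t ∈ Set.Icc c d, f t ≤ g t := by
  intro t htm
  have hmono : MonotoneOn (fun s => g s - f s) (Set.Icc c d) := by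
    apply monotoneOn_of_hasDerivWithinAt_nonneg (convex_Icc c d)
      (f' := fun s => g' s - f' s)
    · intro s hs
      exact ((hg s hs).sub (hf s hs)).continuousWithinAt
    · intro s hs
      exact (((hg s (interior_subset hs)).sub (hf s (interior_subset hs))).mono interior_subset)
    · intro s hs
      exact sub_nonneg.2 (hle s (interior_subset hs))
  have hc : c ∈ Set.Icc c d := Set.left_mem_Icc.2 (htm.1.trans htm.2)
  have := hmono hc htm htm.1
  simp only at this
  linarith

lemma integral_id_mul_exp (τ : ℝ) :
    (∫ s in (0:ℝ)..τ, s * Real.exp s) = (τ - 1) * Real.exp τ + 1 := by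
  have h : ∀ s ∈ Set.uIcc (0:ℝ) τ,
      HasDerivAt (fun x => (x - 1) * Real.exp x) (s * Real.exp s) s := by
    intro s _
    have h1 : HasDerivAt (fun x : ℝ => x - 1) 1 s := (hasDerivAt_id s).sub_const 1
    have h2 := h1.mul (Real.hasDerivAt_exp s)
    exact h2.congr_deriv (by ring)
  have hint : IntervalIntegrable (fun s => s * Real.exp s) MeasureTheory.volume 0 τ :=
    (continuous_id.mul Real.continuous_exp).intervalIntegrable 0 τ
  rw [intervalIntegral.integral_eq_sub_of_hasDerivAt h hint]
  simp [Real.exp_zero]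

/-- Squeezing estimate for finite-dimensional dissipative quadratic systems: under the
stated conditions, `|δ(t)|² ≤ M(t−t₀,ρ)|δ(t₀)|² + γ(t−t₀)|Pδ(t₀)|²` with
`M(τ,ρ) = e^{−τ}(1 + a₆(a₄ + a₅ρ^{1/2})∫₀^τ s e^s ds)` and `γ(τ) = a₆(1 − e^{−τ})`,
where `b = 3a₁`, `a₆ = b²K`, `κ = 2(2a₁K^{1/2} − 1)`, `a₄ = 2e^{κh}(a₁²K/a₂ + a₃)`,
`a₅ = 2a₁e^{3κh/2}`. -/
theorem squeezing_estimate_finite_dimensional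
    {d : ℕ}
    (A : EuclideanSpace ℝ (Fin d) →ₗ[ℝ] EuclideanSpace ℝ (Fin d))
    (hA : ∀ V, ‖V‖ ^ 2 ≤ ⟪A V, V⟫_ℝ)
    (B : EuclideanSpace ℝ (Fin d) →ₗ[ℝ] EuclideanSpace ℝ (Fin d) →ₗ[ℝ] EuclideanSpace ℝ (Fin d))
    (hsymm : ∀ V W, B V W = B W V)
    (henergy : ∀ V, ⟪B V V, V⟫_ℝ = 0)
    (a₁ : ℝ) (ha₁ : 0 < a₁)
    (hbound : ∀ V W, ‖B V W‖ ≤ a₁ * ‖V‖ * ‖W‖)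
    (P : EuclideanSpace ℝ (Fin d) →ₗ[ℝ] EuclideanSpace ℝ (Fin d))
    (hPproj : ∀ x, P (P x) = P x)
    (hPsa : ∀ x y, ⟪P x, y⟫_ℝ = ⟪x, P y⟫_ℝ)
    (hBQ : ∀ V, B (V - P V) (V - P V) = 0)
    (a₂ a₃ : ℝ) (ha₂ : 0 < a₂) (ha₃ : 0 ≤ a₃)
    (hAP : ∀ V, a₂ * ‖P V‖ ^ 2 - a₃ * ‖V‖ ^ 2 ≤ ⟪A V, P V⟫_ℝ)
    (f : EuclideanSpace ℝ (Fin d))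
    (t₀ t₁ h : ℝ) (ht : t₀ ≤ t₁) (hh : 0 < h) (hth : t₁ - t₀ ≤ h)
    (U u : ℝ → EuclideanSpace ℝ (Fin d))
    (hU : ∀ t ∈ Set.Icc t₀ t₁,
      HasDerivWithinAt U (f - A (U t) - B (U t) (U t)) (Set.Icc t₀ t₁) t)
    (hu : ∀ t ∈ Set.Icc t₀ t₁,
      HasDerivWithinAt u (f - A (u t) - B (u t) (u t)) (Set.Icc t₀ t₁) t)
    (K : ℝ) (hK : 0 < K)
    (hUK : ∀ t ∈ Set.Icc t₀ t₁, ‖U t‖ ≤ Real.sqrt K)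
    (ρ : ℝ) (hρ : 0 < ρ) (hδ₀ : ‖U t₀ - u t₀‖ ^ 2 ≤ ρ)
    (κ a₄ a₅ a₆ : ℝ)
    (hκ : κ = 2 * (2 * a₁ * Real.sqrt K - 1))
    (ha₄ : a₄ = 2 * Real.exp (κ * h) * (a₁ ^ 2 * K / a₂ + a₃))
    (ha₅ : a₅ = 2 * a₁ * Real.exp (3 * κ * h / 2))
    (ha₆ : a₆ = (3 * a₁) ^ 2 * K) :
    ∀ t ∈ Set.Icc t₀ t₁,
      ‖U t - u t‖ ^ 2 ≤
        (Real.exp (-(t - t₀)) *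
            (1 + a₆ * (a₄ + a₅ * Real.sqrt ρ) * ∫ s in (0 : ℝ)..(t - t₀), s * Real.exp s))
          * ‖U t₀ - u t₀‖ ^ 2
        + (a₆ * (1 - Real.exp (-(t - t₀)))) * ‖P (U t₀ - u t₀)‖ ^ 2 := by
  intro t htm
  set S := Set.Icc t₀ t₁ with hS
  set δ : ℝ → EuclideanSpace ℝ (Fin d) := fun s => U s - u s with hδdef
  set Dv : ℝ → EuclideanSpace ℝ (Fin d) :=
    fun s => -(A (δ s)) - (2:ℝ) • B (U s) (δ s) + B (δ s) (δ s) with hDvdef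
  set y : ℝ → ℝ := fun s => ⟪δ s, δ s⟫_ℝ with hydef
  set z : ℝ → ℝ := fun s => ⟪P (δ s), P (δ s)⟫_ℝ with hzdef
  set k := Real.sqrt K with hkdef
  have hd2 : (0:ℝ) ≤ t - t₀ := by linarith [htm.1]
  have hd3 : t - t₀ ≤ h := by linarith [htm.2]
  have hk0 : 0 < k := Real.sqrt_pos.2 hK
  have hkK : k ^ 2 = K := Real.sq_sqrt hK.le
  have ht₀S : t₀ ∈ S := Set.left_mem_Icc.2 ht
  -- rewrite goal in terms of y, z
  have hyt : ‖U t - u t‖ ^ 2 = y t := (real_inner_self_eq_norm_sq (δ t)).symm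
  have hyt₀ : ‖U t₀ - u t₀‖ ^ 2 = y t₀ := (real_inner_self_eq_norm_sq (δ t₀)).symm
  have hzt₀ : ‖P (U t₀ - u t₀)‖ ^ 2 = z t₀ := (real_inner_self_eq_norm_sq (P (δ t₀))).symm
  rw [hyt, hyt₀, hzt₀]
  have hynn : ∀ s, 0 ≤ y s := fun s => real_inner_self_nonneg
  have hznn : ∀ s, 0 ≤ z s := fun s => real_inner_self_nonneg
  have hysq : ∀ s, y s = ‖δ s‖ ^ 2 := fun s => real_inner_self_eq_norm_sq (δ s)
  have hzsq : ∀ s, z s = ‖P (δ s)‖ ^ 2 := fun s => real_inner_self_eq_norm_sq (P (δ s))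
  -- polarization
  have hpolar : ∀ V W, 2 * ⟪B V W, V⟫_ℝ = - ⟪B V V, W⟫_ℝ := by
    intro V W
    have h1 := henergy (V + W)
    have h2 := henergy (V - W)
    simp only [map_add, map_sub, LinearMap.add_apply, LinearMap.sub_apply, inner_add_left,
      inner_sub_left, inner_add_right, inner_sub_right, hsymm W V, henergy] at h1 h2
    linarith
  -- derivative of δ
  have hδd : ∀ s ∈ S, HasDerivWithinAt δ (Dv s) S s := by
    intro s hs
    have h1 := (hU s hs).sub (hu s hs)
    refine h1.congr_deriv (Eq.symm ?_)
    show -(A (δ s)) - (2:ℝ) • B (U s) (δ s) + B (δ s) (δ s)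
      = (f - A (U s) - B (U s) (U s)) - (f - A (u s) - B (u s) (u s))
    have hus : u s = U s - δ s := by simp [hδdef]
    simp only [hδdef, map_sub, LinearMap.sub_apply, smul_sub, two_smul]
    rw [hsymm (u s) (U s)]
    abel
  -- projection inequality
  have hmn : ∀ x : EuclideanSpace ℝ (Fin d), ‖P x‖ ≤ ‖x‖ := by
    intro x
    have h1 : ⟪P x, P x⟫_ℝ = ⟪x, P x⟫_ℝ := by rw [hPsa x (P x), hPproj x]
    have h2 := real_inner_le_norm x (P x)
    have h3 := real_inner_self_eq_norm_sq (P x)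
    nlinarith [norm_nonneg (P x), norm_nonneg x]
  -- derivative of y
  have hyd : ∀ s ∈ S, HasDerivWithinAt y (2 * ⟪Dv s, δ s⟫_ℝ) S s := by
    intro s hs
    have h1 := HasDerivWithinAt.inner ℝ (hδd s hs) (hδd s hs)
    refine h1.congr_deriv ?_
    rw [real_inner_comm (δ s) (Dv s)]
    ring
  -- derivative of P ∘ δ and z
  have hPδd : ∀ s ∈ S, HasDerivWithinAt (fun r => P (δ r)) (P (Dv s)) S s := by
    intro s hs
    exact (LinearMap.toContinuousLinearMap P).hasFDerivAt.comp_hasDerivWithinAt s (hδd s hs)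
  have hzd : ∀ s ∈ S, HasDerivWithinAt z (2 * ⟪Dv s, P (δ s)⟫_ℝ) S s := by
    intro s hs
    have h1 := HasDerivWithinAt.inner ℝ (hPδd s hs) (hPδd s hs)
    have e3 : ⟪P (Dv s), P (δ s)⟫_ℝ = ⟪Dv s, P (δ s)⟫_ℝ := by
      rw [hPsa (Dv s) (P (δ s)), hPproj (δ s)]
    have e2 : ⟪P (δ s), P (Dv s)⟫_ℝ = ⟪Dv s, P (δ s)⟫_ℝ :=
      (real_inner_comm (P (Dv s)) (P (δ s))).trans e3
    refine h1.congr_deriv ?_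
    rw [e2, e3]
    ring
  -- inner products against Dv
  have hDvinner : ∀ s, ∀ w : EuclideanSpace ℝ (Fin d),
      ⟪Dv s, w⟫_ℝ = -⟪A (δ s), w⟫_ℝ - 2 * ⟪B (U s) (δ s), w⟫_ℝ + ⟪B (δ s) (δ s), w⟫_ℝ := by
    intro s w
    simp only [hDvdef, inner_sub_left, inner_add_left, inner_neg_left, real_inner_smul_left]
  have hyval : ∀ s, 2 * ⟪Dv s, δ s⟫_ℝ
      = -2 * ⟪A (δ s), δ s⟫_ℝ + 2 * ⟪B (δ s) (δ s), U s⟫_ℝ := by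
    intro s
    rw [hDvinner s (δ s)]
    have e1 : B (U s) (δ s) = B (δ s) (U s) := hsymm _ _
    have e2 := hpolar (δ s) (U s)
    rw [e1, henergy]
    linarith
  -- coarse bound on ⟪Bδδ,U⟫
  have hBcoarse : ∀ s ∈ S, ⟪B (δ s) (δ s), U s⟫_ℝ ≤ a₁ * ‖δ s‖ ^ 2 * k := by
    intro s hs
    calc ⟪B (δ s) (δ s), U s⟫_ℝ ≤ ‖B (δ s) (δ s)‖ * ‖U s‖ := real_inner_le_norm _ _
      _ ≤ (a₁ * ‖δ s‖ * ‖δ s‖) * k := by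
          apply mul_le_mul (hbound _ _) (hUK s hs) (norm_nonneg _)
          positivity
      _ = a₁ * ‖δ s‖ ^ 2 * k := by ring
  -- refined bound on ⟪Bδδ,U⟫
  have hBfine : ∀ s ∈ S, ⟪B (δ s) (δ s), U s⟫_ℝ ≤ 3 * a₁ * k * (‖P (δ s)‖ * ‖δ s‖) := by
    intro s hs
    have hkey : B (δ s) (δ s) = B (P (δ s)) ((2:ℝ) • (δ s) - P (δ s)) := by
      have h0 := hBQ (δ s)
      simp only [map_sub, LinearMap.sub_apply] at h0
      simp only [map_sub, map_smul, two_smul, map_add, LinearMap.add_apply]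
      rw [hsymm (δ s) (P (δ s))] at h0
      have h2 : B (δ s) (δ s) - B (P (δ s)) (δ s)
          - (B (P (δ s)) (δ s) - B (P (δ s)) (P (δ s))) = 0 := h0
      rw [sub_sub, sub_eq_zero] at h2
      rw [h2]
      abel
    calc ⟪B (δ s) (δ s), U s⟫_ℝ ≤ ‖B (δ s) (δ s)‖ * ‖U s‖ := real_inner_le_norm _ _
      _ = ‖B (P (δ s)) ((2:ℝ) • (δ s) - P (δ s))‖ * ‖U s‖ := by rw [← hkey]
      _ ≤ (a₁ * ‖P (δ s)‖ * ‖(2:ℝ) • (δ s) - P (δ s)‖) * ‖U s‖ :=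
          mul_le_mul_of_nonneg_right (hbound _ _) (norm_nonneg _)
      _ ≤ (a₁ * ‖P (δ s)‖ * (3 * ‖δ s‖)) * k := by
          have h2 : ‖(2:ℝ) • (δ s) - P (δ s)‖ ≤ 3 * ‖δ s‖ := by
            calc ‖(2:ℝ) • (δ s) - P (δ s)‖ ≤ ‖(2:ℝ) • (δ s)‖ + ‖P (δ s)‖ := norm_sub_le _ _
              _ = 2 * ‖δ s‖ + ‖P (δ s)‖ := by rw [norm_smul]; simp
              _ ≤ 3 * ‖δ s‖ := by have := hmn (δ s); linarith
          have h3 := hUK s hs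
          gcongr
      _ = 3 * a₁ * k * (‖P (δ s)‖ * ‖δ s‖) := by ring
  -- estimate (i)
  have hyi : ∀ s ∈ S, 2 * ⟪Dv s, δ s⟫_ℝ ≤ (2 * a₁ * k - 2) * y s := by
    intro s hs
    rw [hyval s, hysq s]
    have h1 := hA (δ s)
    have h2 := hBcoarse s hs
    linarith
  -- estimate (ii)
  have hyii : ∀ s ∈ S, 2 * ⟪Dv s, δ s⟫_ℝ ≤ - y s + a₆ * z s := by
    intro s hs
    rw [hyval s, hysq s, hzsq s]
    have h1 := hA (δ s)
    have h2 := hBfine s hs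
    have hsq := sq_nonneg (‖δ s‖ - 3 * a₁ * k * ‖P (δ s)‖)
    have h7 : -2 * ⟪A (δ s), δ s⟫_ℝ + 2 * ⟪B (δ s) (δ s), U s⟫_ℝ
        ≤ -‖δ s‖ ^ 2 + (3 * a₁) ^ 2 * k ^ 2 * ‖P (δ s)‖ ^ 2 := by linarith
    have h8 : (3 * a₁) ^ 2 * k ^ 2 * ‖P (δ s)‖ ^ 2 = a₆ * ‖P (δ s)‖ ^ 2 := by
      rw [hkK, ha₆]
    linarith
  -- z' raw estimate
  have hzest : ∀ s ∈ S, 2 * ⟪Dv s, P (δ s)⟫_ℝ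
      ≤ 2 * (a₃ + a₁ ^ 2 * K / a₂) * ‖δ s‖ ^ 2 + 2 * a₁ * ‖δ s‖ ^ 2 * ‖δ s‖ := by
    intro s hs
    have hexpand : 2 * ⟪Dv s, P (δ s)⟫_ℝ = 2 * (-⟪A (δ s), P (δ s)⟫_ℝ
        - 2 * ⟪B (U s) (δ s), P (δ s)⟫_ℝ + ⟪B (δ s) (δ s), P (δ s)⟫_ℝ) := by
      rw [hDvinner s (P (δ s))]
    rw [hexpand]
    have h1 := hAP (δ s)
    have h2 : |⟪B (U s) (δ s), P (δ s)⟫_ℝ| ≤ a₁ * k * (‖δ s‖ * ‖P (δ s)‖) := by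
      calc |⟪B (U s) (δ s), P (δ s)⟫_ℝ| ≤ ‖B (U s) (δ s)‖ * ‖P (δ s)‖ :=
            abs_real_inner_le_norm _ _
        _ ≤ (a₁ * ‖U s‖ * ‖δ s‖) * ‖P (δ s)‖ :=
            mul_le_mul_of_nonneg_right (hbound _ _) (norm_nonneg _)
        _ ≤ (a₁ * k * ‖δ s‖) * ‖P (δ s)‖ := by
            have h3 := hUK s hs
            gcongr
        _ = a₁ * k * (‖δ s‖ * ‖P (δ s)‖) := by ring
    have h3 : ⟪B (δ s) (δ s), P (δ s)⟫_ℝ ≤ a₁ * ‖δ s‖ ^ 2 * ‖P (δ s)‖ := by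
      calc ⟪B (δ s) (δ s), P (δ s)⟫_ℝ ≤ ‖B (δ s) (δ s)‖ * ‖P (δ s)‖ := real_inner_le_norm _ _
        _ ≤ (a₁ * ‖δ s‖ * ‖δ s‖) * ‖P (δ s)‖ :=
            mul_le_mul_of_nonneg_right (hbound _ _) (norm_nonneg _)
        _ = a₁ * ‖δ s‖ ^ 2 * ‖P (δ s)‖ := by ring
    have h4 := abs_le.1 h2
    have hyoung : 4 * (a₁ * k * (‖δ s‖ * ‖P (δ s)‖))
        ≤ 2 * a₂ * ‖P (δ s)‖ ^ 2 + 2 * (a₁ ^ 2 * K / a₂) * ‖δ s‖ ^ 2 := by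
      rw [← sub_nonneg]
      have hId : 2 * a₂ * ‖P (δ s)‖ ^ 2 + 2 * (a₁ ^ 2 * K / a₂) * ‖δ s‖ ^ 2
          - 4 * (a₁ * k * (‖δ s‖ * ‖P (δ s)‖))
          = 2 / a₂ * (a₂ * ‖P (δ s)‖ - a₁ * k * ‖δ s‖) ^ 2 := by
        rw [← hkK]
        field_simp
        ring
      rw [hId]
      positivity
    have h5 : ‖P (δ s)‖ ≤ ‖δ s‖ := hmn (δ s)
    have h9 : 2 * a₁ * ‖δ s‖ ^ 2 * ‖P (δ s)‖ ≤ 2 * a₁ * ‖δ s‖ ^ 2 * ‖δ s‖ := by gcongr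
    linarith [h1, h4.1, h3, hyoung, h9]
  -- exponential derivative helpers
  have hexp1 : ∀ s : ℝ, HasDerivAt (fun r => Real.exp (r - t₀)) (Real.exp (s - t₀)) s := by
    intro s
    simpa [Function.comp_def] using (Real.hasDerivAt_exp (s - t₀)).comp s ((hasDerivAt_id s).sub_const t₀)
  have hexpκ : ∀ s : ℝ, HasDerivAt (fun r => Real.exp (-κ * (r - t₀)))
      (-κ * Real.exp (-κ * (s - t₀))) s := by
    intro s
    have h1 : HasDerivAt (fun r : ℝ => -κ * (r - t₀)) (-κ) s := by
      simpa using ((hasDerivAt_id s).sub_const t₀).const_mul (-κ)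
    have h2 := (Real.hasDerivAt_exp (-κ * (s - t₀))).comp s h1
    simpa [mul_comm, Function.comp_def] using h2
  -- nonnegativity of constants
  have ha₆nn : 0 ≤ a₆ := by rw [ha₆]; positivity
  have ha₄nn : 0 ≤ a₄ := by rw [ha₄]; positivity
  have ha₅nn : 0 ≤ a₅ := by rw [ha₅]; positivity
  have hCnn : 0 ≤ a₄ + a₅ * Real.sqrt ρ :=
    add_nonneg ha₄nn (mul_nonneg ha₅nn (Real.sqrt_nonneg ρ))
  have hyρ : y t₀ ≤ ρ := by rw [← hyt₀]; exact hδ₀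
  by_cases hsign : κ ≤ 0
  · -- dissipative case : y' ≤ -y
    have haK : 2 * (2 * a₁ * k - 1) ≤ 0 := hκ ▸ hsign
    have hmain := derivCompare (c := t₀) (d := t₁)
        (f := fun s => Real.exp (s - t₀) * y s) (g := fun _ => y t₀)
        (f' := fun s => Real.exp (s - t₀) * y s + Real.exp (s - t₀) * (2 * ⟪Dv s, δ s⟫_ℝ))
        (g' := fun _ => 0)
        (fun s hs => ((hexp1 s).hasDerivWithinAt.mul (hyd s hs)))
        (fun s hs => (hasDerivWithinAt_const s _ (y t₀)))
        (by simp)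
        (by
          intro s hs
          have h1 := hyi s hs
          have h2 := hynn s
          have h3 : y s + 2 * ⟪Dv s, δ s⟫_ℝ ≤ 0 := by nlinarith [hk0.le, ha₁.le]
          have h5 : Real.exp (s - t₀) * (y s + 2 * ⟪Dv s, δ s⟫_ℝ) ≤ 0 :=
            mul_nonpos_iff.2 (Or.inl ⟨(Real.exp_pos _).le, h3⟩)
          show Real.exp (s - t₀) * y s + Real.exp (s - t₀) * (2 * ⟪Dv s, δ s⟫_ℝ) ≤ 0
          nlinarith [h5])
        t htm
    have hyle : y t ≤ Real.exp (-(t - t₀)) * y t₀ := by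
      have he := Real.exp_pos (t - t₀)
      have hmain2 : Real.exp (t - t₀) * y t ≤ y t₀ := hmain
      rw [Real.exp_neg, inv_mul_eq_div, le_div_iff₀ he]
      linarith [hmain2]
    have hInn : 0 ≤ ∫ s in (0:ℝ)..(t - t₀), s * Real.exp s := by
      apply intervalIntegral.integral_nonneg hd2
      intro x hx
      exact mul_nonneg hx.1 (Real.exp_pos x).le
    have hexple : Real.exp (-(t - t₀)) ≤ 1 := by
      have h1 : Real.exp (-(t - t₀)) ≤ Real.exp 0 := Real.exp_le_exp.2 (by linarith)
      simpa using h1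
    have hterm1 : 0 ≤ Real.exp (-(t - t₀)) * (a₆ * (a₄ + a₅ * Real.sqrt ρ)
        * ∫ s in (0:ℝ)..(t - t₀), s * Real.exp s) * y t₀ :=
      mul_nonneg (mul_nonneg (Real.exp_pos _).le
        (mul_nonneg (mul_nonneg ha₆nn hCnn) hInn)) (hynn t₀)
    have hterm2 : 0 ≤ a₆ * (1 - Real.exp (-(t - t₀))) * z t₀ :=
      mul_nonneg (mul_nonneg ha₆nn (by linarith)) (hznn t₀)
    have hexpand : (Real.exp (-(t - t₀)) *
          (1 + a₆ * (a₄ + a₅ * Real.sqrt ρ) * ∫ s in (0:ℝ)..(t - t₀), s * Real.exp s)) * y t₀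
        = Real.exp (-(t - t₀)) * y t₀ + Real.exp (-(t - t₀)) * (a₆ * (a₄ + a₅ * Real.sqrt ρ)
          * ∫ s in (0:ℝ)..(t - t₀), s * Real.exp s) * y t₀ := by ring
    rw [hexpand]
    linarith
  · -- expansive case
    have hκpos : 0 ≤ κ := le_of_lt (not_le.1 hsign)
    have hκval : 2 * a₁ * k - 2 ≤ κ := by rw [hκ]; nlinarith [ha₁.le, hk0.le]
    -- Step 1 : y s ≤ exp (κ (s - t₀)) y t₀
    have hstep1 := derivCompare (c := t₀) (d := t₁)
        (f := fun s => Real.exp (-κ * (s - t₀)) * y s) (g := fun _ => y t₀)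
        (f' := fun s => -κ * Real.exp (-κ * (s - t₀)) * y s
          + Real.exp (-κ * (s - t₀)) * (2 * ⟪Dv s, δ s⟫_ℝ))
        (g' := fun _ => 0)
        (fun s hs => ((hexpκ s).hasDerivWithinAt.mul (hyd s hs)))
        (fun s hs => (hasDerivWithinAt_const s _ (y t₀)))
        (by simp)
        (by
          intro s hs
          have h1 := hyi s hs
          have h2 := hynn s
          have h3 : -κ * y s + 2 * ⟪Dv s, δ s⟫_ℝ ≤ 0 := by nlinarith [hκval]
          have h5 : Real.exp (-κ * (s - t₀)) * (-κ * y s + 2 * ⟪Dv s, δ s⟫_ℝ) ≤ 0 :=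
            mul_nonpos_iff.2 (Or.inl ⟨(Real.exp_pos _).le, h3⟩)
          show -κ * Real.exp (-κ * (s - t₀)) * y s
              + Real.exp (-κ * (s - t₀)) * (2 * ⟪Dv s, δ s⟫_ℝ) ≤ 0
          nlinarith [h5])
    have hyexp : ∀ s ∈ S, y s ≤ Real.exp (κ * (s - t₀)) * y t₀ := by
      intro s hs
      have h1 := hstep1 s hs
      have h3 : Real.exp (κ * (s - t₀)) * (Real.exp (-κ * (s - t₀)) * y s)
          ≤ Real.exp (κ * (s - t₀)) * y t₀ :=
        mul_le_mul_of_nonneg_left h1 (Real.exp_pos _).le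
      have h4 : Real.exp (κ * (s - t₀)) * Real.exp (-κ * (s - t₀)) = 1 := by
        rw [← Real.exp_add, show κ * (s - t₀) + -κ * (s - t₀) = 0 by ring, Real.exp_zero]
      rw [← mul_assoc, h4, one_mul] at h3
      exact h3
    have hyb : ∀ s ∈ S, y s ≤ Real.exp (κ * h) * y t₀ := by
      intro s hs
      have h2 := hyexp s hs
      have h5 : Real.exp (κ * (s - t₀)) ≤ Real.exp (κ * h) := by
        apply Real.exp_le_exp.2
        have h6 : s - t₀ ≤ h := by
          have := hs.2
          have := hs.1
          linarith [hs.2]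
        nlinarith [hκpos]
      have h7 := mul_le_mul_of_nonneg_right h5 (hynn t₀)
      linarith
    have hnb : ∀ s ∈ S, ‖δ s‖ ≤ Real.exp (κ * h / 2) * Real.sqrt ρ := by
      intro s hs
      have h1 : y s ≤ Real.exp (κ * h) * ρ := by
        have := mul_le_mul_of_nonneg_left hyρ (Real.exp_pos (κ * h)).le
        linarith [hyb s hs]
      have h2 : (Real.exp (κ * h / 2) * Real.sqrt ρ) ^ 2 = Real.exp (κ * h) * ρ := by
        rw [mul_pow, Real.sq_sqrt hρ.le, sq, ← Real.exp_add,
          show κ * h / 2 + κ * h / 2 = κ * h by ring]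
      have h3 : ‖δ s‖ ^ 2 ≤ (Real.exp (κ * h / 2) * Real.sqrt ρ) ^ 2 := by
        rw [h2, ← hysq s]
        exact h1
      have h4 : 0 ≤ Real.exp (κ * h / 2) * Real.sqrt ρ := by positivity
      nlinarith [norm_nonneg (δ s)]
    -- Step 2 : z s ≤ z t₀ + C y t₀ (s - t₀)
    have hz'le : ∀ s ∈ S, 2 * ⟪Dv s, P (δ s)⟫_ℝ ≤ (a₄ + a₅ * Real.sqrt ρ) * y t₀ := by
      intro s hs
      have h1 := hzest s hs
      have h2 : ‖δ s‖ ^ 2 ≤ Real.exp (κ * h) * y t₀ := by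
        rw [← hysq s]
        exact hyb s hs
      have h3 := hnb s hs
      have h4 : 2 * (a₃ + a₁ ^ 2 * K / a₂) * ‖δ s‖ ^ 2 ≤ a₄ * y t₀ := by
        rw [ha₄]
        calc 2 * (a₃ + a₁ ^ 2 * K / a₂) * ‖δ s‖ ^ 2
            ≤ 2 * (a₃ + a₁ ^ 2 * K / a₂) * (Real.exp (κ * h) * y t₀) := by gcongr
          _ = 2 * Real.exp (κ * h) * (a₁ ^ 2 * K / a₂ + a₃) * y t₀ := by ring
      have h5 : 2 * a₁ * ‖δ s‖ ^ 2 * ‖δ s‖ ≤ a₅ * Real.sqrt ρ * y t₀ := by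
        rw [ha₅]
        have hynn0 := hynn t₀
        calc 2 * a₁ * ‖δ s‖ ^ 2 * ‖δ s‖
            ≤ 2 * a₁ * ‖δ s‖ ^ 2 * (Real.exp (κ * h / 2) * Real.sqrt ρ) := by gcongr
          _ ≤ 2 * a₁ * (Real.exp (κ * h) * y t₀) * (Real.exp (κ * h / 2) * Real.sqrt ρ) := by
              gcongr
          _ = 2 * a₁ * (Real.exp (κ * h) * Real.exp (κ * h / 2)) * Real.sqrt ρ * y t₀ := by
              ring
          _ = 2 * a₁ * Real.exp (3 * κ * h / 2) * Real.sqrt ρ * y t₀ := by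
              rw [← Real.exp_add, show κ * h + κ * h / 2 = 3 * κ * h / 2 by ring]
      have h6 : (a₄ + a₅ * Real.sqrt ρ) * y t₀ = a₄ * y t₀ + a₅ * Real.sqrt ρ * y t₀ := by
        ring
      linarith
    have hstep2 := derivCompare (c := t₀) (d := t₁)
        (f := z) (g := fun s => z t₀ + (a₄ + a₅ * Real.sqrt ρ) * y t₀ * (s - t₀))
        (f' := fun s => 2 * ⟪Dv s, P (δ s)⟫_ℝ)
        (g' := fun _ => (a₄ + a₅ * Real.sqrt ρ) * y t₀)
        hzd
        (fun s hs => by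
          have h1 : HasDerivAt (fun r => z t₀ + (a₄ + a₅ * Real.sqrt ρ) * y t₀ * (r - t₀))
              ((a₄ + a₅ * Real.sqrt ρ) * y t₀) s := by
            simpa using (((hasDerivAt_id s).sub_const t₀).const_mul
              ((a₄ + a₅ * Real.sqrt ρ) * y t₀)).const_add (z t₀)
          exact h1.hasDerivWithinAt)
        (by simp)
        hz'le
    -- Step 3
    have hstep3 := derivCompare (c := t₀) (d := t₁)
        (f := fun s => Real.exp (s - t₀) * y s)
        (g := fun s => y t₀ + a₆ * (a₄ + a₅ * Real.sqrt ρ) * y t₀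
          * ((s - t₀ - 1) * Real.exp (s - t₀) + 1) + a₆ * z t₀ * (Real.exp (s - t₀) - 1))
        (f' := fun s => Real.exp (s - t₀) * y s + Real.exp (s - t₀) * (2 * ⟪Dv s, δ s⟫_ℝ))
        (g' := fun s => a₆ * (a₄ + a₅ * Real.sqrt ρ) * y t₀ * ((s - t₀) * Real.exp (s - t₀))
          + a₆ * z t₀ * Real.exp (s - t₀))
        (fun s hs => ((hexp1 s).hasDerivWithinAt.mul (hyd s hs)))
        (fun s hs => by
          have hg1 : HasDerivAt (fun r => (r - t₀ - 1) * Real.exp (r - t₀) + 1)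
              ((s - t₀) * Real.exp (s - t₀)) s := by
            have h1 : HasDerivAt (fun r : ℝ => r - t₀ - 1) 1 s :=
              ((hasDerivAt_id s).sub_const t₀).sub_const 1
            have h2 := (h1.mul (hexp1 s)).add_const 1
            exact h2.congr_deriv (by ring)
          have hg2 : HasDerivAt (fun r => Real.exp (r - t₀) - 1) (Real.exp (s - t₀)) s := by
            simpa using (hexp1 s).sub_const 1
          have h3 := ((hg1.const_mul (a₆ * (a₄ + a₅ * Real.sqrt ρ) * y t₀)).const_add
            (y t₀)).add (hg2.const_mul (a₆ * z t₀))
          have h4 := h3.hasDerivWithinAt (s := S)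
          exact h4)
        (by simp)
        (by
          intro s hs
          have h1 := hyii s hs
          have h2 := hstep2 s hs
          have hEp := (Real.exp_pos (s - t₀)).le
          have h3 : y s + 2 * ⟪Dv s, δ s⟫_ℝ ≤ a₆ * z s := by linarith
          have h4 := mul_le_mul_of_nonneg_left h3 hEp
          have h5 : a₆ * z s ≤ a₆ * (z t₀ + (a₄ + a₅ * Real.sqrt ρ) * y t₀ * (s - t₀)) :=
            mul_le_mul_of_nonneg_left h2 ha₆nn
          have h6 := mul_le_mul_of_nonneg_left h5 hEp
          calc Real.exp (s - t₀) * y s + Real.exp (s - t₀) * (2 * ⟪Dv s, δ s⟫_ℝ)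
              = Real.exp (s - t₀) * (y s + 2 * ⟪Dv s, δ s⟫_ℝ) := by ring
            _ ≤ Real.exp (s - t₀) * (a₆ * z s) := h4
            _ ≤ Real.exp (s - t₀)
                * (a₆ * (z t₀ + (a₄ + a₅ * Real.sqrt ρ) * y t₀ * (s - t₀))) := h6
            _ = a₆ * (a₄ + a₅ * Real.sqrt ρ) * y t₀ * ((s - t₀) * Real.exp (s - t₀))
                + a₆ * z t₀ * Real.exp (s - t₀) := by ring)
        t htm
    -- conclude
    have hmul1 : Real.exp (-(t - t₀)) * Real.exp (t - t₀) = 1 := by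
      rw [← Real.exp_add]
      simp
    beta_reduce at hstep3
    have h7 := mul_le_mul_of_nonneg_left hstep3 (Real.exp_pos (-(t - t₀))).le
    have h8 : y t ≤ Real.exp (-(t - t₀)) * (y t₀ + a₆ * (a₄ + a₅ * Real.sqrt ρ) * y t₀
        * ((t - t₀ - 1) * Real.exp (t - t₀) + 1) + a₆ * z t₀ * (Real.exp (t - t₀) - 1)) := by
      have e1 : y t = Real.exp (-(t - t₀)) * (Real.exp (t - t₀) * y t) := by
        rw [← mul_assoc, hmul1, one_mul]
      rw [e1]
      exact h7
    rw [integral_id_mul_exp]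
    have hEq : (Real.exp (-(t - t₀)) *
          (1 + a₆ * (a₄ + a₅ * Real.sqrt ρ) * ((t - t₀ - 1) * Real.exp (t - t₀) + 1))) * y t₀
        + (a₆ * (1 - Real.exp (-(t - t₀)))) * z t₀
        = Real.exp (-(t - t₀)) * (y t₀ + a₆ * (a₄ + a₅ * Real.sqrt ρ) * y t₀
          * ((t - t₀ - 1) * Real.exp (t - t₀) + 1) + a₆ * z t₀ * (Real.exp (t - t₀) - 1)) := by
      linear_combination (-(a₆ * z t₀)) * hmul1
    rw [hEq]
    exact h8
end

section
/- Existence of a contracting assimilation interval in expectation. Let (Ω,𝓕,ℙ) be a probability space, T : Ω → Ω an invertible measure-preserving map with T and T⁻¹ ergodic, R a random variable with 𝔼R = 0 and 𝔼|R|² = 1, R_n = R∘Tⁿ, and let ρ₀(τ) = K̄ + 6|f|²/(1 − e^{−τ}) + 4|U(t₀)|²/τ + 4σ² Σ_{k=0}^{∞} e^{−kτ}|R_{−k}|², where K̄ = 2(|U(t₀)|² + |f|² + |η|²) and σ, |f|, |U(t₀)|, |η| are nonnegative constants with σ > 0. For constants a₁, a₂, K > 0 and a₃ ≥ 0, set κ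 = 2(2a₁K^{1/2} − 1), a₄(τ) = 2e^{κτ}(a₁²K/a₂ + a₃), a₅(τ) = 2a₁e^{3κτ/2}, a₆ = 9a₁²K, and define m(τ) = e^{−τ}·(1 + a₆·(a₄(τ) + a₅(τ)·𝔼[ρ₀(τ)^{1/2}])·∫₀^τ s e^s ds). Then there exists τ* > 0 such that m(τ) < 1 for all τ ∈ (0, τ*]. -/
open MeasureTheory Filter

lemma sqrt_amgm (x t : ℝ) (hx : 0 ≤ x) (ht : 0 < t) :
    Real.sqrt x ≤ (t * x + 1 / t) / 2 := by
  have ha : (0:ℝ) < Real.sqrt t := Real.sqrt_pos.mpr ht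
  have h1 : Real.sqrt t ^ 2 = t := Real.sq_sqrt ht.le
  have h2 : Real.sqrt x ^ 2 = x := Real.sq_sqrt hx
  have h3 := sq_nonneg (Real.sqrt t * Real.sqrt x - 1 / Real.sqrt t)
  have h4 : Real.sqrt t * (1 / Real.sqrt t) = 1 := mul_one_div_cancel ha.ne'
  have h5 : (1 / Real.sqrt t) ^ 2 = 1 / t := by rw [div_pow, one_pow, h1]
  nlinarith [Real.sqrt_nonneg x, Real.sqrt_nonneg t]

set_option maxHeartbeats 1000000 in

/-- Existence of a contracting assimilation interval in expectation: with the stochastic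
a priori bound `ρ₀(τ)` and `m(τ) = 𝔼[M(τ, ρ₀(τ))]` as defined below, there exists
`τ* > 0` such that `m(τ) < 1` for all `τ ∈ (0, τ*]`. -/
theorem contracting_interval_in_expectation
    {E : Type*} [NormedAddCommGroup E]
    {Ω : Type*} [MeasurableSpace Ω] (μ : Measure Ω) [IsProbabilityMeasure μ]
    (T : Equiv.Perm Ω)
    (hT : MeasurePreserving T μ μ)
    (hTerg : Ergodic (⇑T) μ) (hTinvErg : Ergodic (⇑T.symm) μ)
    (R : Ω → E)
    (hRmeas : Measurable fun ω => ‖R ω‖)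
    (hRvar : ∫ ω, ‖R ω‖ ^ 2 ∂μ = 1)
    -- nonnegative constants σ, |f|, |U(t₀)|, |η|, with σ > 0
    (σ f0 u0 e0 : ℝ) (hσ : 0 < σ) (hf0 : 0 ≤ f0) (hu0 : 0 ≤ u0) (he0 : 0 ≤ e0)
    (Kbar : ℝ) (hKbar : Kbar = 2 * (u0 ^ 2 + f0 ^ 2 + e0 ^ 2))
    -- the stochastic a priori bound associated with update interval h = τ
    (ρ : ℝ → Ω → ℝ)
    (hρdef : ∀ (τ : ℝ) (ω : Ω),
      ρ τ ω = Kbar + 6 * f0 ^ 2 / (1 - Real.exp (-τ)) + 4 * u0 ^ 2 / τ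
        + 4 * σ ^ 2 * ∑' k : ℕ, Real.exp (-(k * τ)) * ‖R ((⇑T.symm)^[k] ω)‖ ^ 2)
    -- the constants of the squeezing function
    (a₁ a₂ K a₃ : ℝ) (ha₁ : 0 < a₁) (ha₂ : 0 < a₂) (hKpos : 0 < K) (ha₃ : 0 ≤ a₃)
    (κ : ℝ) (hκ : κ = 2 * (2 * a₁ * Real.sqrt K - 1))
    (a₄ a₅ : ℝ → ℝ) (a₆ : ℝ)
    (ha₄ : ∀ τ, a₄ τ = 2 * Real.exp (κ * τ) * (a₁ ^ 2 * K / a₂ + a₃))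
    (ha₅ : ∀ τ, a₅ τ = 2 * a₁ * Real.exp (3 * κ * τ / 2))
    (ha₆ : a₆ = 9 * a₁ ^ 2 * K)
    -- the expected squeezing factor
    (m : ℝ → ℝ)
    (hm : ∀ τ, m τ = Real.exp (-τ) *
      (1 + a₆ * (a₄ τ + a₅ τ * ∫ ω, Real.sqrt (ρ τ ω) ∂μ)
        * ∫ s in (0 : ℝ)..τ, s * Real.exp s)) :
    ∃ τstar > (0 : ℝ), ∀ τ : ℝ, 0 < τ → τ ≤ τstar → m τ < 1 := by
  have hKbar0 : 0 ≤ Kbar := by rw [hKbar]; positivity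
  set C₀ : ℝ := Kbar + 12 * f0 ^ 2 + 4 * u0 ^ 2 + 8 * σ ^ 2 with hC₀def
  have hC₀ : 0 ≤ C₀ := by positivity
  set C₁ : ℝ := (C₀ + 1) / 2 with hC₁def
  have hC₁ : 0 < C₁ := by positivity
  -- global facts about R
  have hRint : Integrable (fun ω => ‖R ω‖ ^ 2) μ := by
    by_contra h
    rw [integral_undef h] at hRvar
    norm_num at hRvar
  have hTm : MeasurePreserving (⇑T.symm) μ μ := hTinvErg.toMeasurePreserving
  have hR2meas : Measurable (fun ω => ENNReal.ofReal (‖R ω‖ ^ 2)) :=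
    ENNReal.measurable_ofReal.comp (hRmeas.pow_const 2)
  have hL1 : ∫⁻ ω, ENNReal.ofReal (‖R ω‖ ^ 2) ∂μ = 1 := by
    rw [← ofReal_integral_eq_lintegral_ofReal hRint (ae_of_all _ fun ω => by positivity),
      hRvar, ENNReal.ofReal_one]
  -- key bound on the expected square root of ρ
  have key : ∀ τ : ℝ, 0 < τ → τ ≤ 1 →
      (∫ ω, Real.sqrt (ρ τ ω) ∂μ) ≤ C₁ / Real.sqrt τ := by
    intro τ hτ hτ1
    set q : ℝ := Real.exp (-τ) with hqdef
    have hq0 : 0 < q := Real.exp_pos _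
    have hq1 : q < 1 := Real.exp_lt_one_iff.mpr (by linarith)
    have h1q : τ / 2 ≤ 1 - q := by
      have h1 : τ + 1 ≤ Real.exp τ := Real.add_one_le_exp τ
      have h2 : q = (Real.exp τ)⁻¹ := by rw [hqdef, Real.exp_neg]
      have h3 : q ≤ (1 + τ)⁻¹ := by
        rw [h2]
        exact inv_anti₀ (by linarith) (by linarith)
      have h4 : (1 + τ)⁻¹ ≤ 1 - τ / 2 := by
        rw [← one_div, div_le_iff₀ (by linarith : (0:ℝ) < 1 + τ)]
        nlinarith [mul_nonneg hτ.le (by linarith : (0:ℝ) ≤ 1 - τ)]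
      linarith
    have h1qpos : 0 < 1 - q := by linarith
    have hinv2 : (1 - q)⁻¹ ≤ 2 / τ := by
      have : (2:ℝ) / τ = (τ / 2)⁻¹ := by
        rw [inv_div]
      rw [this]
      exact inv_anti₀ (by positivity) h1q
    -- the series
    set g : ℕ → Ω → ℝ := fun k ω => Real.exp (-(k * τ)) * ‖R ((⇑T.symm)^[k] ω)‖ ^ 2 with hgdef
    have hgnn : ∀ k ω, 0 ≤ g k ω := fun k ω => by positivity
    have hgmeas : ∀ k, Measurable (g k) := fun k =>
      (measurable_const.mul (((hRmeas.comp (hTm.iterate k).measurable)).pow_const 2))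
    set G : ℕ → Ω → ENNReal := fun k ω => ENNReal.ofReal (g k ω) with hGdef
    have hGmeas : ∀ k, Measurable (G k) := fun k =>
      ENNReal.measurable_ofReal.comp (hgmeas k)
    have hexpq : ∀ k : ℕ, Real.exp (-(k * τ)) = q ^ k := by
      intro k
      rw [hqdef, ← Real.exp_nat_mul]
      congr 1
      ring
    have hGlint : ∀ k, ∫⁻ ω, G k ω ∂μ = ENNReal.ofReal (q ^ k) := by
      intro k
      have hmk : Measurable fun ω => ENNReal.ofReal (‖R ((⇑T.symm)^[k] ω)‖ ^ 2) :=
        hR2meas.comp (hTm.iterate k).measurable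
      have hcomp : ∫⁻ ω, ENNReal.ofReal (‖R ((⇑T.symm)^[k] ω)‖ ^ 2) ∂μ
          = ∫⁻ ω, ENNReal.ofReal (‖R ω‖ ^ 2) ∂μ :=
        (hTm.iterate k).lintegral_comp hR2meas
      calc ∫⁻ ω, G k ω ∂μ
          = ∫⁻ ω, ENNReal.ofReal (Real.exp (-((k:ℝ) * τ))) *
              ENNReal.ofReal (‖R ((⇑T.symm)^[k] ω)‖ ^ 2) ∂μ := by
            apply lintegral_congr
            intro ω
            rw [hGdef]
            simp only [hgdef]
            rw [ENNReal.ofReal_mul (Real.exp_nonneg _)]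
        _ = ENNReal.ofReal (Real.exp (-((k:ℝ) * τ))) *
              ∫⁻ ω, ENNReal.ofReal (‖R ((⇑T.symm)^[k] ω)‖ ^ 2) ∂μ :=
            lintegral_const_mul _ hmk
        _ = ENNReal.ofReal (q ^ k) := by rw [hcomp, hL1, mul_one, hexpq]
    have hsumq : Summable (fun k : ℕ => q ^ k) := summable_geometric_of_lt_one hq0.le hq1
    have hGsum : ∑' k, ∫⁻ ω, G k ω ∂μ = ENNReal.ofReal ((1 - q)⁻¹) := by
      simp_rw [hGlint]
      rw [← ENNReal.ofReal_tsum_of_nonneg (fun k => pow_nonneg hq0.le k) hsumq,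
        tsum_geometric_of_lt_one hq0.le hq1]
    set S : Ω → ℝ := fun ω => ∑' k, g k ω with hSdef
    have hS_eq : ∀ ω, S ω = (∑' k, G k ω).toReal := by
      intro ω
      rw [ENNReal.tsum_toReal_eq (fun k => ENNReal.ofReal_ne_top)]
      exact tsum_congr fun k => (ENNReal.toReal_ofReal (hgnn k ω)).symm
    have hSnn : ∀ ω, 0 ≤ S ω := fun ω => tsum_nonneg (fun k => hgnn k ω)
    have hSmeas : Measurable S := by
      have : S = fun ω => (∑' k, G k ω).toReal := funext hS_eq
      rw [this]
      exact (Measurable.ennreal_tsum hGmeas).ennreal_toReal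
    have hSlint : ∫⁻ ω, ENNReal.ofReal (S ω) ∂μ ≤ ENNReal.ofReal ((1 - q)⁻¹) := by
      calc ∫⁻ ω, ENNReal.ofReal (S ω) ∂μ ≤ ∫⁻ ω, ∑' k, G k ω ∂μ := by
            apply lintegral_mono
            intro ω
            show ENNReal.ofReal (S ω) ≤ ∑' k, G k ω
            rw [hS_eq ω]
            exact ENNReal.ofReal_toReal_le
        _ = ∑' k, ∫⁻ ω, G k ω ∂μ := lintegral_tsum (fun k => (hGmeas k).aemeasurable)
        _ = ENNReal.ofReal ((1 - q)⁻¹) := hGsum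
    have hSint : Integrable S μ :=
      ⟨hSmeas.aestronglyMeasurable,
        (hasFiniteIntegral_iff_ofReal (ae_of_all _ hSnn)).2
          (lt_of_le_of_lt hSlint ENNReal.ofReal_lt_top)⟩
    have hSval : ∫ ω, S ω ∂μ ≤ (1 - q)⁻¹ := by
      rw [integral_eq_lintegral_of_nonneg_ae (ae_of_all _ hSnn) hSmeas.aestronglyMeasurable]
      calc (∫⁻ ω, ENNReal.ofReal (S ω) ∂μ).toReal
          ≤ (ENNReal.ofReal ((1 - q)⁻¹)).toReal :=
            ENNReal.toReal_mono ENNReal.ofReal_ne_top hSlint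
        _ ≤ (1 - q)⁻¹ := le_of_eq (ENNReal.toReal_ofReal (by positivity))
    -- ρ in terms of S
    set c : ℝ := Kbar + 6 * f0 ^ 2 / (1 - q) + 4 * u0 ^ 2 / τ with hcdef
    have hc0 : 0 ≤ c := by positivity
    have hρeq : ρ τ = fun ω => c + 4 * σ ^ 2 * S ω := funext fun ω => hρdef τ ω
    have hρmeas : Measurable (ρ τ) := by
      rw [hρeq]; exact measurable_const.add (hSmeas.const_mul _)
    have hρnn : ∀ ω, 0 ≤ ρ τ ω := by
      intro ω; rw [hρeq]; have := hSnn ω; positivity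
    have hρint : Integrable (ρ τ) μ := by
      rw [hρeq]; exact (integrable_const c).add (hSint.const_mul _)
    have hρval : ∫ ω, ρ τ ω ∂μ ≤ C₀ / τ := by
      have h1 : ∫ ω, ρ τ ω ∂μ = c + 4 * σ ^ 2 * ∫ ω, S ω ∂μ := by
        rw [hρeq, integral_add (integrable_const c) (hSint.const_mul _),
          integral_const, integral_const_mul]
        simp [measure_univ]
      rw [h1]
      have h2 : 6 * f0 ^ 2 / (1 - q) ≤ 6 * f0 ^ 2 * (2 / τ) := by
        rw [div_eq_mul_inv]
        exact mul_le_mul_of_nonneg_left hinv2 (by positivity)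
      have h3 : 4 * σ ^ 2 * ∫ ω, S ω ∂μ ≤ 4 * σ ^ 2 * (2 / τ) :=
        mul_le_mul_of_nonneg_left (hSval.trans hinv2) (by positivity)
      have h4 : Kbar ≤ Kbar / τ := by
        rw [le_div_iff₀ hτ]
        simpa using mul_le_mul_of_nonneg_left hτ1 hKbar0
      rw [hcdef, hC₀def]
      have h5 : 6 * f0 ^ 2 * (2 / τ) = 12 * f0 ^ 2 / τ := by ring
      have h6 : 4 * σ ^ 2 * (2 / τ) = 8 * σ ^ 2 / τ := by ring
      rw [h5] at h2
      rw [h6] at h3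
      have : (Kbar + 12 * f0 ^ 2 + 4 * u0 ^ 2 + 8 * σ ^ 2) / τ
          = Kbar / τ + 12 * f0 ^ 2 / τ + 4 * u0 ^ 2 / τ + 8 * σ ^ 2 / τ := by ring
      rw [this]
      linarith
    -- now bound the integral of the square root
    have hst : 0 < Real.sqrt τ := Real.sqrt_pos.mpr hτ
    set b : Ω → ℝ := fun ω => (Real.sqrt τ * ρ τ ω + 1 / Real.sqrt τ) / 2 with hbdef
    have hble : ∀ ω, Real.sqrt (ρ τ ω) ≤ b ω := fun ω =>
      sqrt_amgm (ρ τ ω) (Real.sqrt τ) (hρnn ω) hst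
    have hbint : Integrable b μ :=
      (((hρint.const_mul (Real.sqrt τ)).add (integrable_const _)).div_const 2)
    have hsqint : Integrable (fun ω => Real.sqrt (ρ τ ω)) μ := by
      apply hbint.mono' (hρmeas.sqrt.aestronglyMeasurable)
      filter_upwards with ω
      rw [Real.norm_eq_abs, abs_of_nonneg (Real.sqrt_nonneg _)]
      exact hble ω
    have hIle : ∫ ω, Real.sqrt (ρ τ ω) ∂μ ≤ ∫ ω, b ω ∂μ :=
      integral_mono hsqint hbint hble
    have hbval : ∫ ω, b ω ∂μ = (Real.sqrt τ * ∫ ω, ρ τ ω ∂μ + 1 / Real.sqrt τ) / 2 := by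
      rw [hbdef]
      simp only
      rw [integral_div, integral_add (hρint.const_mul _) (integrable_const _),
        integral_const_mul, integral_const]
      simp [measure_univ]
    have hτsq : Real.sqrt τ * Real.sqrt τ = τ := Real.mul_self_sqrt hτ.le
    have hfinal : (Real.sqrt τ * (C₀ / τ) + 1 / Real.sqrt τ) / 2 = C₁ / Real.sqrt τ := by
      have e1 : Real.sqrt τ * (C₀ / τ) = C₀ / Real.sqrt τ := by
        rw [eq_div_iff hst.ne']
        field_simp
        linear_combination C₀ * hτsq
      rw [e1, hC₁def, ← add_div, div_div, div_div, mul_comm]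
    calc ∫ ω, Real.sqrt (ρ τ ω) ∂μ ≤ ∫ ω, b ω ∂μ := hIle
      _ = (Real.sqrt τ * ∫ ω, ρ τ ω ∂μ + 1 / Real.sqrt τ) / 2 := hbval
      _ ≤ (Real.sqrt τ * (C₀ / τ) + 1 / Real.sqrt τ) / 2 := by
          have := mul_le_mul_of_nonneg_left hρval hst.le
          linarith
      _ = C₁ / Real.sqrt τ := hfinal
  -- nonnegativity of the integral of sqrt ρ
  have hInn : ∀ τ : ℝ, 0 ≤ ∫ ω, Real.sqrt (ρ τ ω) ∂μ := fun τ =>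
    integral_nonneg (fun ω => Real.sqrt_nonneg _)
  -- constants
  have ha₆pos : 0 < a₆ := by rw [ha₆]; positivity
  set A₄ : ℝ := 2 * Real.exp |κ| * (a₁ ^ 2 * K / a₂ + a₃) with hA₄def
  set A₅ : ℝ := 2 * a₁ * Real.exp (3 * |κ| / 2) with hA₅def
  have hA₄pos : 0 < A₄ := by positivity
  have hA₅pos : 0 < A₅ := by positivity
  have ha₄le : ∀ τ : ℝ, 0 < τ → τ ≤ 1 → a₄ τ ≤ A₄ := by
    intro τ hτ hτ1
    rw [ha₄ τ, hA₄def]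
    have : Real.exp (κ * τ) ≤ Real.exp |κ| := by
      apply Real.exp_le_exp.mpr
      calc κ * τ ≤ |κ| * τ := mul_le_mul_of_nonneg_right (le_abs_self κ) hτ.le
        _ ≤ |κ| * 1 := mul_le_mul_of_nonneg_left hτ1 (abs_nonneg κ)
        _ = |κ| := mul_one _
    have hfac : 0 ≤ a₁ ^ 2 * K / a₂ + a₃ := by positivity
    exact mul_le_mul_of_nonneg_right
      (mul_le_mul_of_nonneg_left this (by norm_num : (0:ℝ) ≤ 2)) hfac
  have ha₅le : ∀ τ : ℝ, 0 < τ → τ ≤ 1 → a₅ τ ≤ A₅ := by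
    intro τ hτ hτ1
    rw [ha₅ τ, hA₅def]
    have : Real.exp (3 * κ * τ / 2) ≤ Real.exp (3 * |κ| / 2) := by
      apply Real.exp_le_exp.mpr
      have : 3 * κ * τ ≤ 3 * |κ| := by
        calc 3 * κ * τ ≤ 3 * |κ| * τ := by
              apply mul_le_mul_of_nonneg_right _ hτ.le
              have := le_abs_self κ
              linarith
          _ ≤ 3 * |κ| * 1 := by
              apply mul_le_mul_of_nonneg_left hτ1
              positivity
          _ = 3 * |κ| := mul_one _
      linarith
    exact mul_le_mul_of_nonneg_left this (by positivity)
  have ha₄pos : ∀ τ : ℝ, 0 < a₄ τ := by intro τ; rw [ha₄ τ]; positivity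
  have ha₅pos : ∀ τ : ℝ, 0 < a₅ τ := by intro τ; rw [ha₅ τ]; positivity
  -- the interval integral bound
  have hJ : ∀ τ : ℝ, 0 < τ → τ ≤ 1 →
      (0 ≤ ∫ s in (0:ℝ)..τ, s * Real.exp s) ∧
      (∫ s in (0:ℝ)..τ, s * Real.exp s) ≤ 2 * τ ^ 2 := by
    intro τ hτ hτ1
    have hcont : Continuous (fun s : ℝ => s * Real.exp s) :=
      continuous_id.mul Real.continuous_exp
    have hint1 : IntervalIntegrable (fun s : ℝ => s * Real.exp s) volume 0 τ :=
      hcont.intervalIntegrable 0 τ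
    have hint2 : IntervalIntegrable (fun s : ℝ => Real.exp 1 * s) volume 0 τ :=
      (continuous_const.mul continuous_id).intervalIntegrable 0 τ
    constructor
    · apply intervalIntegral.integral_nonneg hτ.le
      intro s hs
      have h0 : 0 ≤ s := hs.1
      positivity
    · have hle : (∫ s in (0:ℝ)..τ, s * Real.exp s) ≤ ∫ s in (0:ℝ)..τ, Real.exp 1 * s := by
        apply intervalIntegral.integral_mono_on hτ.le hint1 hint2
        intro s hs
        have h0 : 0 ≤ s := hs.1
        have h1 : s ≤ 1 := hs.2.trans hτ1
        have : Real.exp s ≤ Real.exp 1 := Real.exp_le_exp.mpr h1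
        calc s * Real.exp s = Real.exp s * s := mul_comm _ _
          _ ≤ Real.exp 1 * s := mul_le_mul_of_nonneg_right this h0
      have heval : (∫ s in (0:ℝ)..τ, Real.exp 1 * s) = Real.exp 1 * (τ ^ 2 / 2) := by
        rw [intervalIntegral.integral_const_mul, integral_id]
        ring
      have he : Real.exp 1 ≤ 3 := by
        have := Real.exp_one_lt_d9
        linarith
      calc (∫ s in (0:ℝ)..τ, s * Real.exp s) ≤ Real.exp 1 * (τ ^ 2 / 2) := by
            rw [← heval]; exact hle
        _ ≤ 2 * τ ^ 2 := by
            have k3 : Real.exp 1 * τ ^ 2 ≤ 3 * τ ^ 2 :=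
              mul_le_mul_of_nonneg_right he (sq_nonneg τ)
            linarith [sq_nonneg τ]
  -- choose τstar
  set τstar : ℝ := min 1 (min (1 / (4 * a₆ * A₄ + 1)) ((1 / (4 * a₆ * A₅ * C₁ + 1)) ^ 2))
    with hτstardef
  have hτstarpos : 0 < τstar := by
    apply lt_min one_pos
    apply lt_min
    · positivity
    · positivity
  refine ⟨τstar, hτstarpos, ?_⟩
  intro τ hτ hτle
  have hτ1 : τ ≤ 1 := hτle.trans (min_le_left _ _)
  have hτ2 : τ ≤ 1 / (4 * a₆ * A₄ + 1) :=
    hτle.trans ((min_le_right _ _).trans (min_le_left _ _))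
  have hτ3 : τ ≤ (1 / (4 * a₆ * A₅ * C₁ + 1)) ^ 2 :=
    hτle.trans ((min_le_right _ _).trans (min_le_right _ _))
  have hst : 0 < Real.sqrt τ := Real.sqrt_pos.mpr hτ
  have hτsq : Real.sqrt τ * Real.sqrt τ = τ := Real.mul_self_sqrt hτ.le
  have hsτ3 : Real.sqrt τ ≤ 1 / (4 * a₆ * A₅ * C₁ + 1) := by
    have h := Real.sqrt_le_sqrt hτ3
    rwa [Real.sqrt_sq (by positivity)] at h
  obtain ⟨hJ0, hJ2⟩ := hJ τ hτ hτ1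
  set I : ℝ := ∫ ω, Real.sqrt (ρ τ ω) ∂μ with hIdef
  have hIle : I ≤ C₁ / Real.sqrt τ := key τ hτ hτ1
  have hI0 : 0 ≤ I := hInn τ
  -- bound the product term
  have hP : a₆ * (a₄ τ + a₅ τ * I) * (∫ s in (0:ℝ)..τ, s * Real.exp s)
      ≤ a₆ * (A₄ + A₅ * (C₁ / Real.sqrt τ)) * (2 * τ ^ 2) := by
    have h1 : a₄ τ + a₅ τ * I ≤ A₄ + A₅ * (C₁ / Real.sqrt τ) := by
      have h2 : a₅ τ * I ≤ A₅ * (C₁ / Real.sqrt τ) := by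
        apply mul_le_mul (ha₅le τ hτ hτ1) hIle hI0 hA₅pos.le
      linarith [ha₄le τ hτ hτ1]
    apply mul_le_mul _ hJ2 hJ0 _
    · exact mul_le_mul_of_nonneg_left h1 ha₆pos.le
    · have := ha₄pos τ
      have := ha₅pos τ
      positivity
  have hCd : 0 < C₁ / Real.sqrt τ := by positivity
  -- the bound is at most τ
  have hPle : a₆ * (A₄ + A₅ * (C₁ / Real.sqrt τ)) * (2 * τ ^ 2) ≤ τ := by
    have hexpand : a₆ * (A₄ + A₅ * (C₁ / Real.sqrt τ)) * (2 * τ ^ 2)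
        = 2 * a₆ * A₄ * τ ^ 2 + 2 * a₆ * A₅ * C₁ * (τ * Real.sqrt τ) := by
      have e2 : C₁ / Real.sqrt τ * τ ^ 2 = C₁ * (τ * Real.sqrt τ) := by
        rw [div_mul_eq_mul_div, div_eq_iff hst.ne']
        linear_combination (-(C₁ * τ)) * hτsq
      calc a₆ * (A₄ + A₅ * (C₁ / Real.sqrt τ)) * (2 * τ ^ 2)
          = 2 * a₆ * A₄ * τ ^ 2 + 2 * a₆ * A₅ * (C₁ / Real.sqrt τ * τ ^ 2) := by ring
        _ = 2 * a₆ * A₄ * τ ^ 2 + 2 * a₆ * A₅ * C₁ * (τ * Real.sqrt τ) := by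
            rw [e2]; ring
    rw [hexpand]
    have hb1 : 2 * a₆ * A₄ * τ ^ 2 ≤ τ / 2 := by
      have h : τ * (4 * a₆ * A₄ + 1) ≤ 1 := by
        rw [← le_div_iff₀ (by positivity)]
        exact hτ2.trans_eq (by rw [one_div])
      have k1 : 4 * (a₆ * A₄) * τ ^ 2 + τ ^ 2 ≤ τ := by
        calc 4 * (a₆ * A₄) * τ ^ 2 + τ ^ 2 = τ * (4 * a₆ * A₄ + 1) * τ := by ring
          _ ≤ 1 * τ := mul_le_mul_of_nonneg_right h hτ.le
          _ = τ := one_mul τ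
      linarith [k1, sq_nonneg τ]
    have hb2 : 2 * a₆ * A₅ * C₁ * (τ * Real.sqrt τ) ≤ τ / 2 := by
      have h : Real.sqrt τ * (4 * a₆ * A₅ * C₁ + 1) ≤ 1 := by
        rw [← le_div_iff₀ (by positivity)]
        exact hsτ3.trans_eq (by rw [one_div])
      have k2 : 4 * (a₆ * A₅ * C₁) * (τ * Real.sqrt τ) + τ * Real.sqrt τ ≤ τ := by
        calc 4 * (a₆ * A₅ * C₁) * (τ * Real.sqrt τ) + τ * Real.sqrt τ
            = Real.sqrt τ * (4 * a₆ * A₅ * C₁ + 1) * τ := by ring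
          _ ≤ 1 * τ := mul_le_mul_of_nonneg_right h hτ.le
          _ = τ := one_mul τ
      linarith [k2, mul_nonneg hτ.le hst.le]
    linarith
  -- conclude
  rw [hm τ]
  have hlt : 1 + a₆ * (a₄ τ + a₅ τ * I) * (∫ s in (0:ℝ)..τ, s * Real.exp s)
      < Real.exp τ := by
    have h := Real.add_one_lt_exp (x := τ) hτ.ne'
    linarith [hP.trans hPle]
  calc Real.exp (-τ) * (1 + a₆ * (a₄ τ + a₅ τ * I) * ∫ s in (0:ℝ)..τ, s * Real.exp s)
      < Real.exp (-τ) * Real.exp τ := by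
        apply mul_lt_mul_of_pos_left hlt (Real.exp_pos _)
    _ = 1 := by rw [← Real.exp_add]; simp
end

section
/- Expected squeezing below one for the Navier–Stokes assimilation factor at large λ. Let (Ω,𝓕,ℙ) be a probability space, T : Ω → Ω an invertible measure-preserving map with T and T⁻¹ ergodic, and R₀ a random variable with 𝔼(|R₀|^{8/3}) < ∞; set R_{−k} = R₀∘T^{−k}. Fix constants ν, λ₁, K, σ, h > 0 and K̄, F(h) ≥ 0, and define the random variable ρ₀(h) = K̄ + F(h) + 4σ² Σ_{k=0}^{∞} e^{−νλ₁kh}|R_{−k}|². For λ > 0, let κ = 2^{−1/3}(5/8)^{5/3}(3/8)ν^{−5/3}λ₁^{−1/3}K^{4/3}, C₁ = 2^{−1/4}ν^{−1}λ₁^{−1/4}, C₂ = 5^{5/3}·2^{−22/3}·3·ν^{−5/3}λ₁^{−1/3}, g(s,ρ) = C₁λ^{1/4}e^{κs}(ρ^{1/2}e^{κs/2} + 2K^{1/2})² + C₂e^{κs}(ρ^{1/2}e^{κs/2} + 2K^{1/2})^{8/3}, and M(h,ρ) = e^{−νλh}(1 + ∫₀^h g(s,ρ)e^{νλs} ds).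 Then for every h > 0 there exists λ* < ∞ such that for all λ > λ*, 𝔼[M(h, ρ₀(h))] < 1. -/
open MeasureTheory Filter
open scoped ENNReal NNReal Topology

/-- Jensen/Hölder inequality for `ℝ≥0∞`-valued tsums. -/
lemma aux_tsum_jensen (w f : ℕ → ℝ≥0∞) {p : ℝ} (hp : 1 ≤ p) :
    (∑' k, w k * f k) ≤ (∑' k, w k) ^ (1 - p⁻¹) * (∑' k, w k * f k ^ p) ^ p⁻¹ := by
  have h1 : (0:ℝ) ≤ 1 - p⁻¹ := by
    have : p⁻¹ ≤ 1 := inv_le_one_of_one_le₀ hp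
    linarith
  have h2 : (0:ℝ) ≤ p⁻¹ := by positivity
  rw [ENNReal.tsum_eq_iSup_sum]
  refine iSup_le fun s => ?_
  refine (ENNReal.inner_le_weight_mul_Lp_of_nonneg s hp w f).trans ?_
  exact mul_le_mul' (ENNReal.rpow_le_rpow (ENNReal.sum_le_tsum s) h1)
    (ENNReal.rpow_le_rpow (ENNReal.sum_le_tsum s) h2)

lemma aux_add_rpow_ennreal (a b : ℝ≥0∞) {p : ℝ} (hp : 0 ≤ p) :
    (a + b) ^ p ≤ 2 ^ p * (a ^ p + b ^ p) := by
  calc (a + b) ^ p ≤ (2 * max a b) ^ p := by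
        refine ENNReal.rpow_le_rpow ?_ hp
        rw [two_mul]
        exact add_le_add (le_max_left a b) (le_max_right a b)
    _ = 2 ^ p * (max a b) ^ p := ENNReal.mul_rpow_of_nonneg _ _ hp
    _ ≤ 2 ^ p * (a ^ p + b ^ p) := by
        refine mul_le_mul_right ?_ _
        rcases max_cases a b with ⟨h, _⟩ | ⟨h, _⟩ <;> rw [h]
        · exact le_add_right le_rfl
        · exact le_add_left le_rfl

lemma aux_add_rpow_real {a b : ℝ} (ha : 0 ≤ a) (hb : 0 ≤ b) {p : ℝ} (hp : 0 ≤ p) :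
    (a + b) ^ p ≤ 2 ^ p * (a ^ p + b ^ p) := by
  calc (a + b) ^ p ≤ (2 * max a b) ^ p := by
        refine Real.rpow_le_rpow (by positivity) ?_ hp
        rw [two_mul]
        exact add_le_add (le_max_left a b) (le_max_right a b)
    _ = 2 ^ p * (max a b) ^ p := Real.mul_rpow (by norm_num) (le_max_of_le_left ha)
    _ ≤ 2 ^ p * (a ^ p + b ^ p) := by
        refine mul_le_mul_of_nonneg_left ?_ (by positivity)
        rcases max_cases a b with ⟨h, _⟩ | ⟨h, _⟩ <;> rw [h]
        · nlinarith [Real.rpow_nonneg hb p]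
        · nlinarith [Real.rpow_nonneg ha p]

lemma aux_exp_integral {c : ℝ} (hc : c ≠ 0) (h : ℝ) :
    ∫ s in (0:ℝ)..h, Real.exp (c * s) = (Real.exp (c * h) - 1) / c := by
  rw [intervalIntegral.integral_comp_mul_left (fun x => Real.exp x) hc]
  simp [integral_exp, mul_comm, div_eq_inv_mul]

lemma aux_self_le_one_add_rpow {t : ℝ} (ht : 0 ≤ t) : t ≤ 1 + t ^ ((4:ℝ)/3) := by
  rcases le_total t 1 with h | h
  · nlinarith [Real.rpow_nonneg ht ((4:ℝ)/3)]
  · have : t ^ (1:ℝ) ≤ t ^ ((4:ℝ)/3) :=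
      Real.rpow_le_rpow_of_exponent_le h (by norm_num)
    rw [Real.rpow_one] at this
    linarith

/-- Finiteness of the `4/3`-moment of a function dominated by a geometric series of
squares with finite `8/3`-moments. -/
lemma aux_lintegral_fin {Ω : Type*} [MeasurableSpace Ω] (μ : Measure Ω) [IsProbabilityMeasure μ]
    (q : ℝ≥0∞) (hq : q < 1) (w : ℕ → ℝ≥0∞) (hw : ∀ k, w k = q ^ k)
    (Z : ℕ → Ω → ℝ≥0∞) (hZm : ∀ k, Measurable (Z k))
    (I : ℝ≥0∞) (hI : I ≠ ⊤) (hZI : ∀ k, ∫⁻ ω, Z k ω ^ ((8:ℝ)/3) ∂μ = I)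
    (Cb Db : ℝ≥0∞) (hCb : Cb ≠ ⊤) (hDb : Db ≠ ⊤)
    (f : Ω → ℝ≥0∞) (hf : ∀ ω, f ω ≤ Cb + Db * ∑' k, w k * Z k ω ^ (2:ℕ)) :
    ∫⁻ ω, f ω ^ ((4:ℝ)/3) ∂μ ≠ ⊤ := by
  set S : ℝ≥0∞ := ∑' k, w k with hSdef
  have hS : S ≠ ⊤ := by
    have : S = (1 - q)⁻¹ := by
      rw [hSdef]
      simp_rw [hw]
      exact ENNReal.tsum_geometric q
    rw [this]
    refine ENNReal.inv_ne_top.2 ?_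
    simp only [ne_eq, tsub_eq_zero_iff_le, not_le]
    exact hq
  set Y : Ω → ℝ≥0∞ := fun ω => ∑' k, w k * Z k ω ^ (2:ℕ) with hYdef
  have hYm : Measurable Y := Measurable.ennreal_tsum fun k => ((hZm k).pow_const 2).const_mul (w k)
  have hpow : ∀ ω, Y ω ^ ((4:ℝ)/3) ≤ S ^ ((1:ℝ)/3) * ∑' k, w k * Z k ω ^ ((8:ℝ)/3) := by
    intro ω
    have hj := aux_tsum_jensen w (fun k => Z k ω ^ (2:ℕ)) (p := (4:ℝ)/3) (by norm_num)
    have hinv : ((4:ℝ)/3)⁻¹ = 3/4 := by norm_num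
    have h14 : (1:ℝ) - (3/4 : ℝ) = 1/4 := by norm_num
    rw [hinv, h14] at hj
    have hZ83 : ∀ k, (Z k ω ^ (2:ℕ)) ^ ((4:ℝ)/3) = Z k ω ^ ((8:ℝ)/3) := by
      intro k
      rw [← ENNReal.rpow_natCast (Z k ω) 2, ← ENNReal.rpow_mul]
      norm_num
    simp_rw [hZ83] at hj
    calc Y ω ^ ((4:ℝ)/3)
        ≤ (S ^ ((1:ℝ)/4) * (∑' k, w k * Z k ω ^ ((8:ℝ)/3)) ^ ((3:ℝ)/4)) ^ ((4:ℝ)/3) := by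
          refine ENNReal.rpow_le_rpow ?_ (by norm_num)
          convert hj using 2 <;> norm_num
      _ = S ^ ((1:ℝ)/3) * ∑' k, w k * Z k ω ^ ((8:ℝ)/3) := by
          rw [ENNReal.mul_rpow_of_nonneg _ _ (by norm_num : (0:ℝ) ≤ 4/3),
            ← ENNReal.rpow_mul, ← ENNReal.rpow_mul]
          norm_num
  have htsum_int : ∫⁻ ω, (∑' k, w k * Z k ω ^ ((8:ℝ)/3)) ∂μ = S * I := by
    rw [lintegral_tsum fun k => (((hZm k).pow_const ((8:ℝ)/3)).const_mul (w k)).aemeasurable]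
    have : ∀ k, ∫⁻ ω, w k * Z k ω ^ ((8:ℝ)/3) ∂μ = w k * I := by
      intro k
      rw [lintegral_const_mul (w k) ((hZm k).pow_const ((8:ℝ)/3)), hZI k]
    simp_rw [this]
    exact ENNReal.tsum_mul_right
  have hYint : ∫⁻ ω, Y ω ^ ((4:ℝ)/3) ∂μ ≤ S ^ ((1:ℝ)/3) * (S * I) := by
    calc ∫⁻ ω, Y ω ^ ((4:ℝ)/3) ∂μ
        ≤ ∫⁻ ω, S ^ ((1:ℝ)/3) * ∑' k, w k * Z k ω ^ ((8:ℝ)/3) ∂μ := lintegral_mono hpow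
      _ = S ^ ((1:ℝ)/3) * ∫⁻ ω, (∑' k, w k * Z k ω ^ ((8:ℝ)/3)) ∂μ :=
          lintegral_const_mul _ (Measurable.ennreal_tsum fun k =>
            ((hZm k).pow_const ((8:ℝ)/3)).const_mul (w k))
      _ = S ^ ((1:ℝ)/3) * (S * I) := by rw [htsum_int]
  have hmain : ∫⁻ ω, f ω ^ ((4:ℝ)/3) ∂μ
      ≤ 2 ^ ((4:ℝ)/3) * (Cb ^ ((4:ℝ)/3) + Db ^ ((4:ℝ)/3) * (S ^ ((1:ℝ)/3) * (S * I))) := by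
    calc ∫⁻ ω, f ω ^ ((4:ℝ)/3) ∂μ
        ≤ ∫⁻ ω, 2 ^ ((4:ℝ)/3) * (Cb ^ ((4:ℝ)/3) + Db ^ ((4:ℝ)/3) * Y ω ^ ((4:ℝ)/3)) ∂μ := by
          refine lintegral_mono fun ω => ?_
          calc f ω ^ ((4:ℝ)/3) ≤ (Cb + Db * Y ω) ^ ((4:ℝ)/3) :=
                ENNReal.rpow_le_rpow (hf ω) (by norm_num)
            _ ≤ 2 ^ ((4:ℝ)/3) * (Cb ^ ((4:ℝ)/3) + (Db * Y ω) ^ ((4:ℝ)/3)) :=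
                aux_add_rpow_ennreal _ _ (by norm_num)
            _ = 2 ^ ((4:ℝ)/3) * (Cb ^ ((4:ℝ)/3) + Db ^ ((4:ℝ)/3) * Y ω ^ ((4:ℝ)/3)) := by
                rw [ENNReal.mul_rpow_of_nonneg _ _ (by norm_num : (0:ℝ) ≤ 4/3)]
      _ = 2 ^ ((4:ℝ)/3) * (Cb ^ ((4:ℝ)/3) + Db ^ ((4:ℝ)/3) * ∫⁻ ω, Y ω ^ ((4:ℝ)/3) ∂μ) := by
          rw [lintegral_const_mul _ (by
            exact (measurable_const.add ((hYm.pow_const ((4:ℝ)/3)).const_mul _)))]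
          congr 1
          rw [lintegral_add_left measurable_const, lintegral_const,
            lintegral_const_mul _ (hYm.pow_const ((4:ℝ)/3))]
          simp
      _ ≤ 2 ^ ((4:ℝ)/3) * (Cb ^ ((4:ℝ)/3) + Db ^ ((4:ℝ)/3) * (S ^ ((1:ℝ)/3) * (S * I))) :=
          mul_le_mul_right (add_le_add_right (mul_le_mul_right hYint _) _) _
  refine ne_top_of_le_ne_top ?_ hmain
  have h2 : (2:ℝ≥0∞) ^ ((4:ℝ)/3) ≠ ⊤ :=
    ENNReal.rpow_ne_top_of_nonneg (by norm_num) (by norm_num)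
  have hCb' : Cb ^ ((4:ℝ)/3) ≠ ⊤ := ENNReal.rpow_ne_top_of_nonneg (by norm_num) hCb
  have hDb' : Db ^ ((4:ℝ)/3) ≠ ⊤ := ENNReal.rpow_ne_top_of_nonneg (by norm_num) hDb
  have hS' : S ^ ((1:ℝ)/3) ≠ ⊤ := ENNReal.rpow_ne_top_of_nonneg (by norm_num) hS
  exact ENNReal.mul_ne_top h2 (ENNReal.add_ne_top.2 ⟨hCb',
    ENNReal.mul_ne_top hDb' (ENNReal.mul_ne_top hS' (ENNReal.mul_ne_top hS hI))⟩)

lemma aux_integrable_of_lintegral {Ω : Type*} [MeasurableSpace Ω] (μ : Measure Ω)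
    [IsProbabilityMeasure μ] (ρ : Ω → ℝ) (hm : Measurable ρ) (hnn : ∀ ω, 0 ≤ ρ ω)
    (hfin : ∫⁻ ω, ENNReal.ofReal (ρ ω) ^ ((4:ℝ)/3) ∂μ ≠ ⊤) :
    Integrable (fun ω => ρ ω ^ ((4:ℝ)/3)) μ ∧ Integrable ρ μ := by
  have hkey : ∀ ω, (‖ρ ω ^ ((4:ℝ)/3)‖₊ : ℝ≥0∞) = ENNReal.ofReal (ρ ω) ^ ((4:ℝ)/3) := by
    intro ω
    rw [← enorm_eq_nnnorm, ← ofReal_norm, Real.norm_of_nonneg (Real.rpow_nonneg (hnn ω) _),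
      ← ENNReal.ofReal_rpow_of_nonneg (hnn ω) (by norm_num)]
  have h43 : Integrable (fun ω => ρ ω ^ ((4:ℝ)/3)) μ := by
    refine ⟨(hm.pow_const ((4:ℝ)/3)).aestronglyMeasurable, ?_⟩
    rw [hasFiniteIntegral_def]
    simp_rw [enorm_eq_nnnorm, hkey]
    exact hfin.lt_top
  refine ⟨h43, ?_⟩
  have h1 : Integrable (fun ω => 1 + ρ ω ^ ((4:ℝ)/3)) μ := (integrable_const 1).add h43
  refine h1.mono' hm.aestronglyMeasurable (Filter.Eventually.of_forall fun ω => ?_)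
  rw [Real.norm_of_nonneg (hnn ω)]
  exact aux_self_le_one_add_rpow (hnn ω)

set_option maxHeartbeats 1000000 in
/-- Expected squeezing below one for the Navier–Stokes assimilation factor at large λ:
if `𝔼(|R₀|^{8/3}) < ∞`, then for every `h > 0` there exists `lam* < ∞` such that for all
`λ > lam*` the expected squeezing factor satisfies `𝔼[M(h, ρ₀(h))] < 1`. -/
theorem navier_stokes_expected_squeezing_lt_one
    {E : Type*} [NormedAddCommGroup E]
    {Ω : Type*} [MeasurableSpace Ω] (μ : Measure Ω) [IsProbabilityMeasure μ]
    (T : Equiv.Perm Ω)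
    (hT : MeasurePreserving T μ μ)
    (hTerg : Ergodic (⇑T) μ) (hTinvErg : Ergodic (⇑T.symm) μ)
    (R₀ : Ω → E)
    (hRmeas : Measurable fun ω => ‖R₀ ω‖)
    (hRmom : Integrable (fun ω => ‖R₀ ω‖ ^ ((8 : ℝ) / 3)) μ)
    -- the constants
    (ν lam₁ K σ h : ℝ) (hν : 0 < ν) (hlam₁ : 0 < lam₁) (hKpos : 0 < K)
    (hσ : 0 < σ) (hh : 0 < h)
    (Kbar Fh : ℝ) (hKbar : 0 ≤ Kbar) (hFh : 0 ≤ Fh)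
    -- the a priori bound with update interval h
    (ρ₀ : Ω → ℝ)
    (hρ₀def : ∀ ω, ρ₀ ω = Kbar + Fh
      + 4 * σ ^ 2 * ∑' k : ℕ, Real.exp (-(ν * lam₁ * k * h)) * ‖R₀ ((⇑T.symm)^[k] ω)‖ ^ 2)
    (κ C₁ C₂ : ℝ)
    (hκ : κ = 2 ^ (-(1 : ℝ) / 3) * ((5 : ℝ) / 8) ^ ((5 : ℝ) / 3) * (3 / 8)
      * ν ^ (-(5 : ℝ) / 3) * lam₁ ^ (-(1 : ℝ) / 3) * K ^ ((4 : ℝ) / 3))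
    (hC₁ : C₁ = 2 ^ (-(1 : ℝ) / 4) * ν⁻¹ * lam₁ ^ (-(1 : ℝ) / 4))
    (hC₂ : C₂ = 5 ^ ((5 : ℝ) / 3) * 2 ^ (-(22 : ℝ) / 3) * 3
      * ν ^ (-(5 : ℝ) / 3) * lam₁ ^ (-(1 : ℝ) / 3))
    -- the squeezing factor M(h, ρ₀(h)) as a function of λ
    (M : ℝ → Ω → ℝ)
    (hMdef : ∀ (lam : ℝ) (ω : Ω),
      M lam ω = Real.exp (-(ν * lam * h)) *
        (1 + ∫ s in (0 : ℝ)..h,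
          (C₁ * lam ^ ((1 : ℝ) / 4) * Real.exp (κ * s)
              * (Real.sqrt (ρ₀ ω) * Real.exp (κ * s / 2) + 2 * Real.sqrt K) ^ 2
            + C₂ * Real.exp (κ * s)
              * (Real.sqrt (ρ₀ ω) * Real.exp (κ * s / 2) + 2 * Real.sqrt K) ^ ((8 : ℝ) / 3))
            * Real.exp (ν * lam * s))) :
    ∃ lamStar : ℝ, ∀ lam : ℝ, lamStar < lam → ∫ ω, M lam ω ∂μ < 1 := by
  classical
  -- positivity of the constants
  have hκpos : 0 < κ := by
    rw [hκ]
    have := Real.rpow_pos_of_pos hν (-(5:ℝ)/3)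
    have := Real.rpow_pos_of_pos hlam₁ (-(1:ℝ)/3)
    have := Real.rpow_pos_of_pos hKpos ((4:ℝ)/3)
    have := Real.rpow_pos_of_pos (by norm_num : (0:ℝ) < 2) (-(1:ℝ)/3)
    have := Real.rpow_pos_of_pos (by norm_num : (0:ℝ) < 5/8) ((5:ℝ)/3)
    positivity
  have hC₁pos : 0 < C₁ := by
    rw [hC₁]
    have := Real.rpow_pos_of_pos (by norm_num : (0:ℝ) < 2) (-(1:ℝ)/4)
    have := Real.rpow_pos_of_pos hlam₁ (-(1:ℝ)/4)
    positivity
  have hC₂pos : 0 < C₂ := by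
    rw [hC₂]
    have := Real.rpow_pos_of_pos (by norm_num : (0:ℝ) < 5) ((5:ℝ)/3)
    have := Real.rpow_pos_of_pos (by norm_num : (0:ℝ) < 2) (-(22:ℝ)/3)
    have := Real.rpow_pos_of_pos hν (-(5:ℝ)/3)
    have := Real.rpow_pos_of_pos hlam₁ (-(1:ℝ)/3)
    positivity
  -- measure-theoretic setup
  have hiter : ∀ k : ℕ, MeasurePreserving ((⇑T.symm)^[k]) μ μ := fun k =>
    (hTinvErg.toMeasurePreserving).iterate k
  set X : Ω → ℝ≥0∞ := fun ω => (‖R₀ ω‖₊ : ℝ≥0∞) with hXdef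
  have hXm : Measurable X := by
    have : X = fun ω => ENNReal.ofReal ‖R₀ ω‖ := by
      funext ω; exact (ofReal_norm _).symm
    rw [this]
    exact ENNReal.measurable_ofReal.comp hRmeas
  set Z : ℕ → Ω → ℝ≥0∞ := fun k ω => X ((⇑T.symm)^[k] ω) with hZdef
  have hZm : ∀ k, Measurable (Z k) := fun k => hXm.comp (hiter k).measurable
  set w : ℕ → ℝ≥0∞ := fun k => ENNReal.ofReal (Real.exp (-(ν * lam₁ * k * h))) with hwdef
  set q : ℝ≥0∞ := ENNReal.ofReal (Real.exp (-(ν * lam₁ * h))) with hqdef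
  have hw : ∀ k, w k = q ^ k := by
    intro k
    show ENNReal.ofReal (Real.exp (-(ν * lam₁ * k * h))) = q ^ k
    rw [hqdef, ← ENNReal.ofReal_pow (Real.exp_nonneg _), ← Real.exp_nat_mul]
    congr 1
    push_cast
    ring
  have hq1 : q < 1 := by
    rw [hqdef]
    refine ENNReal.ofReal_lt_one.2 (Real.exp_lt_one_iff.2 ?_)
    nlinarith [mul_pos (mul_pos hν hlam₁) hh]
  set Y : Ω → ℝ≥0∞ := fun ω => ∑' k, w k * Z k ω ^ (2:ℕ) with hYdef
  have hYm : Measurable Y := Measurable.ennreal_tsum fun k => ((hZm k).pow_const 2).const_mul (w k)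
  -- representation of ρ₀ via toReal
  have hρrep : ∀ ω, ρ₀ ω = Kbar + Fh + 4 * σ ^ 2 * (Y ω).toReal := by
    intro ω
    rw [hρ₀def ω]
    congr 1
    congr 1
    have ht : (Y ω).toReal = ∑' k, (w k * Z k ω ^ (2:ℕ)).toReal := by
      rw [hYdef]
      exact ENNReal.tsum_toReal_eq fun k =>
        ENNReal.mul_ne_top ENNReal.ofReal_ne_top (ENNReal.pow_ne_top ENNReal.coe_ne_top)
    rw [ht]
    refine tsum_congr fun k => ?_
    rw [ENNReal.toReal_mul, ENNReal.toReal_ofReal (Real.exp_nonneg _), ENNReal.toReal_pow]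
    simp [hZdef, hXdef]
  have hρm : Measurable ρ₀ := by
    have : ρ₀ = fun ω => Kbar + Fh + 4 * σ ^ 2 * (Y ω).toReal := funext hρrep
    rw [this]
    exact measurable_const.add ((hYm.ennreal_toReal).const_mul _)
  have hρnn : ∀ ω, 0 ≤ ρ₀ ω := fun ω => by
    rw [hρrep ω]
    positivity
  -- finiteness of the 4/3 moment of ρ₀
  have hI : (∫⁻ ω, X ω ^ ((8:ℝ)/3) ∂μ) ≠ ⊤ := by
    have heq : ∀ ω, X ω ^ ((8:ℝ)/3) = (‖(‖R₀ ω‖ ^ ((8:ℝ)/3) : ℝ)‖₊ : ℝ≥0∞) := by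
      intro ω
      simp only [hXdef, ← enorm_eq_nnnorm, ← ofReal_norm,
        Real.norm_of_nonneg (Real.rpow_nonneg (norm_nonneg _) _),
        ENNReal.ofReal_rpow_of_nonneg (norm_nonneg _) (by norm_num : (0:ℝ) ≤ 8/3)]
    simp_rw [heq]
    exact hRmom.2.ne
  have hZI : ∀ k, ∫⁻ ω, Z k ω ^ ((8:ℝ)/3) ∂μ = ∫⁻ ω, X ω ^ ((8:ℝ)/3) ∂μ := fun k =>
    (hiter k).lintegral_comp (hXm.pow_const ((8:ℝ)/3))
  have hofle : ∀ ω, ENNReal.ofReal (ρ₀ ω)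
      ≤ ENNReal.ofReal (Kbar + Fh) + ENNReal.ofReal (4 * σ ^ 2) * Y ω := by
    intro ω
    rw [hρrep ω]
    calc ENNReal.ofReal (Kbar + Fh + 4 * σ ^ 2 * (Y ω).toReal)
        ≤ ENNReal.ofReal (Kbar + Fh) + ENNReal.ofReal (4 * σ ^ 2 * (Y ω).toReal) :=
          ENNReal.ofReal_add_le
      _ = ENNReal.ofReal (Kbar + Fh) + ENNReal.ofReal (4 * σ ^ 2) * ENNReal.ofReal (Y ω).toReal := by
          rw [ENNReal.ofReal_mul (by positivity)]
      _ ≤ ENNReal.ofReal (Kbar + Fh) + ENNReal.ofReal (4 * σ ^ 2) * Y ω :=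
          add_le_add_right (mul_le_mul_right ENNReal.ofReal_toReal_le _) _
  have hfin : ∫⁻ ω, ENNReal.ofReal (ρ₀ ω) ^ ((4:ℝ)/3) ∂μ ≠ ⊤ :=
    aux_lintegral_fin μ q hq1 w hw Z hZm _ hI hZI _ _
      ENNReal.ofReal_ne_top ENNReal.ofReal_ne_top _ hofle
  obtain ⟨hInt43, hIntρ⟩ := aux_integrable_of_lintegral μ ρ₀ hρm hρnn hfin
  -- integrability of the two moment functions
  have hPm : Measurable fun ω => Real.sqrt (ρ₀ ω) * Real.exp (κ * h / 2) + 2 * Real.sqrt K :=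
    (hρm.sqrt.mul measurable_const).add measurable_const
  have hIntP2 : Integrable
      (fun ω => (Real.sqrt (ρ₀ ω) * Real.exp (κ * h / 2) + 2 * Real.sqrt K) ^ 2) μ := by
    refine ((hIntρ.const_mul (2 * Real.exp (κ * h / 2) ^ 2)).add
      (integrable_const (8 * K))).mono' (hPm.pow_const 2).aestronglyMeasurable
      (Filter.Eventually.of_forall fun ω => ?_)
    simp only [Pi.add_apply]
    rw [Real.norm_of_nonneg (by positivity)]
    have h1e : (Real.sqrt (ρ₀ ω) * Real.exp (κ * h / 2)) ^ 2
        = ρ₀ ω * Real.exp (κ * h / 2) ^ 2 := by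
      rw [mul_pow, Real.sq_sqrt (hρnn ω)]
    have h2e : (2 * Real.sqrt K) ^ 2 = 4 * K := by
      rw [mul_pow, Real.sq_sqrt hKpos.le]; norm_num
    nlinarith [sq_nonneg (Real.sqrt (ρ₀ ω) * Real.exp (κ * h / 2) - 2 * Real.sqrt K), h1e, h2e]
  have hIntP83 : Integrable
      (fun ω => (Real.sqrt (ρ₀ ω) * Real.exp (κ * h / 2) + 2 * Real.sqrt K) ^ ((8:ℝ)/3)) μ := by
    refine (((hInt43.const_mul (Real.exp (κ * h / 2) ^ ((8:ℝ)/3))).add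
      (integrable_const ((2 * Real.sqrt K) ^ ((8:ℝ)/3)))).const_mul
      (2 ^ ((8:ℝ)/3))).mono' ((hPm.pow_const ((8:ℝ)/3)).aestronglyMeasurable)
      (Filter.Eventually.of_forall fun ω => ?_)
    simp only [Pi.add_apply]
    rw [Real.norm_of_nonneg (Real.rpow_nonneg (by positivity) _)]
    have hu : (Real.sqrt (ρ₀ ω) * Real.exp (κ * h / 2)) ^ ((8:ℝ)/3)
        = Real.exp (κ * h / 2) ^ ((8:ℝ)/3) * ρ₀ ω ^ ((4:ℝ)/3) := by
      rw [Real.mul_rpow (Real.sqrt_nonneg _) (Real.exp_nonneg _), Real.sqrt_eq_rpow,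
        ← Real.rpow_mul (hρnn ω)]
      norm_num [mul_comm]
    have hb := aux_add_rpow_real (a := Real.sqrt (ρ₀ ω) * Real.exp (κ * h / 2))
      (b := 2 * Real.sqrt K) (p := (8:ℝ)/3)
      (mul_nonneg (Real.sqrt_nonneg _) (Real.exp_nonneg _)) (by positivity) (by norm_num)
    rw [hu] at hb
    linarith [hb]
  -- the two moments
  set A : ℝ := ∫ ω, (Real.sqrt (ρ₀ ω) * Real.exp (κ * h / 2) + 2 * Real.sqrt K) ^ 2 ∂μ with hAdef
  set B : ℝ := ∫ ω, (Real.sqrt (ρ₀ ω) * Real.exp (κ * h / 2) + 2 * Real.sqrt K) ^ ((8:ℝ)/3) ∂μ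
    with hBdef
  -- pointwise bound on M
  have hptwise : ∀ lam : ℝ, 0 < lam → ∀ ω, M lam ω ≤ Real.exp (-(ν * lam * h))
      + (C₁ * lam ^ ((1:ℝ)/4) * Real.exp (κ * h) / (ν * lam))
          * (Real.sqrt (ρ₀ ω) * Real.exp (κ * h / 2) + 2 * Real.sqrt K) ^ 2
      + (C₂ * Real.exp (κ * h) / (ν * lam))
          * (Real.sqrt (ρ₀ ω) * Real.exp (κ * h / 2) + 2 * Real.sqrt K) ^ ((8:ℝ)/3) := by
    intro lam hlam ω
    rw [hMdef]
    have hc : 0 < ν * lam := mul_pos hν hlam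
    set a : ℝ := Real.sqrt (ρ₀ ω) with hadef
    have ha : 0 ≤ a := Real.sqrt_nonneg _
    have hbK : (0:ℝ) ≤ 2 * Real.sqrt K := by positivity
    set P : ℝ := a * Real.exp (κ * h / 2) + 2 * Real.sqrt K with hPdef
    have hP0 : 0 ≤ P := by rw [hPdef]; positivity
    set G : ℝ := C₁ * lam ^ ((1:ℝ)/4) * Real.exp (κ * h) * P ^ 2
      + C₂ * Real.exp (κ * h) * P ^ ((8:ℝ)/3) with hGdef
    have hG0 : 0 ≤ G := by
      rw [hGdef]
      have := Real.rpow_nonneg hlam.le ((1:ℝ)/4)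
      have := Real.rpow_nonneg hP0 ((8:ℝ)/3)
      positivity
    -- continuity of the integrand
    have hcont1 : Continuous fun s : ℝ => a * Real.exp (κ * s / 2) + 2 * Real.sqrt K := by
      fun_prop
    have hcont2 : Continuous fun s : ℝ =>
        (a * Real.exp (κ * s / 2) + 2 * Real.sqrt K) ^ ((8:ℝ)/3) :=
      hcont1.rpow_const fun s => Or.inr (by norm_num)
    have hcontF : Continuous fun s : ℝ =>
        (C₁ * lam ^ ((1:ℝ)/4) * Real.exp (κ * s)
            * (a * Real.exp (κ * s / 2) + 2 * Real.sqrt K) ^ 2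
          + C₂ * Real.exp (κ * s)
            * (a * Real.exp (κ * s / 2) + 2 * Real.sqrt K) ^ ((8:ℝ)/3))
          * Real.exp (ν * lam * s) := by
      refine Continuous.mul (Continuous.add ?_ ?_) (by fun_prop)
      · exact ((continuous_const.mul (by fun_prop : Continuous fun s : ℝ =>
          Real.exp (κ * s))).mul (hcont1.pow 2))
      · exact (continuous_const.mul (by fun_prop : Continuous fun s : ℝ =>
          Real.exp (κ * s))).mul hcont2
    have hFint : IntervalIntegrable (fun s : ℝ =>
        (C₁ * lam ^ ((1:ℝ)/4) * Real.exp (κ * s)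
            * (a * Real.exp (κ * s / 2) + 2 * Real.sqrt K) ^ 2
          + C₂ * Real.exp (κ * s)
            * (a * Real.exp (κ * s / 2) + 2 * Real.sqrt K) ^ ((8:ℝ)/3))
          * Real.exp (ν * lam * s)) MeasureTheory.volume 0 h :=
      hcontF.intervalIntegrable 0 h
    have hGint : IntervalIntegrable (fun s : ℝ => G * Real.exp (ν * lam * s))
        MeasureTheory.volume 0 h :=
      (continuous_const.mul (by fun_prop : Continuous fun s : ℝ =>
        Real.exp (ν * lam * s))).intervalIntegrable 0 h
    have hmono : ∀ s ∈ Set.Icc (0:ℝ) h,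
        (C₁ * lam ^ ((1:ℝ)/4) * Real.exp (κ * s)
            * (a * Real.exp (κ * s / 2) + 2 * Real.sqrt K) ^ 2
          + C₂ * Real.exp (κ * s)
            * (a * Real.exp (κ * s / 2) + 2 * Real.sqrt K) ^ ((8:ℝ)/3))
          * Real.exp (ν * lam * s) ≤ G * Real.exp (ν * lam * s) := by
      intro s hs
      obtain ⟨hs0, hsh⟩ := hs
      have he1 : Real.exp (κ * s) ≤ Real.exp (κ * h) :=
        Real.exp_le_exp.2 (by nlinarith)
      have he2 : Real.exp (κ * s / 2) ≤ Real.exp (κ * h / 2) :=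
        Real.exp_le_exp.2 (by nlinarith)
      have hXs : 0 ≤ a * Real.exp (κ * s / 2) + 2 * Real.sqrt K := by positivity
      have hPle : a * Real.exp (κ * s / 2) + 2 * Real.sqrt K ≤ P := by
        rw [hPdef]
        have := mul_le_mul_of_nonneg_left he2 ha
        linarith
      refine mul_le_mul_of_nonneg_right ?_ (Real.exp_nonneg _)
      rw [hGdef]
      refine add_le_add ?_ ?_
      · have hsq : (a * Real.exp (κ * s / 2) + 2 * Real.sqrt K) ^ 2 ≤ P ^ 2 := by
          nlinarith
        have hco : 0 ≤ C₁ * lam ^ ((1:ℝ)/4) := by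
          have := Real.rpow_nonneg hlam.le ((1:ℝ)/4)
          positivity
        calc C₁ * lam ^ ((1:ℝ)/4) * Real.exp (κ * s)
              * (a * Real.exp (κ * s / 2) + 2 * Real.sqrt K) ^ 2
            ≤ C₁ * lam ^ ((1:ℝ)/4) * Real.exp (κ * h)
              * (a * Real.exp (κ * s / 2) + 2 * Real.sqrt K) ^ 2 := by
              refine mul_le_mul_of_nonneg_right ?_ (by positivity)
              exact mul_le_mul_of_nonneg_left he1 hco
          _ ≤ C₁ * lam ^ ((1:ℝ)/4) * Real.exp (κ * h) * P ^ 2 := by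
              refine mul_le_mul_of_nonneg_left hsq (by positivity)
      · have hrp : (a * Real.exp (κ * s / 2) + 2 * Real.sqrt K) ^ ((8:ℝ)/3)
            ≤ P ^ ((8:ℝ)/3) := Real.rpow_le_rpow hXs hPle (by norm_num)
        calc C₂ * Real.exp (κ * s)
              * (a * Real.exp (κ * s / 2) + 2 * Real.sqrt K) ^ ((8:ℝ)/3)
            ≤ C₂ * Real.exp (κ * h)
              * (a * Real.exp (κ * s / 2) + 2 * Real.sqrt K) ^ ((8:ℝ)/3) := by
              refine mul_le_mul_of_nonneg_right ?_ (Real.rpow_nonneg hXs _)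
              exact mul_le_mul_of_nonneg_left he1 hC₂pos.le
          _ ≤ C₂ * Real.exp (κ * h) * P ^ ((8:ℝ)/3) := by
              refine mul_le_mul_of_nonneg_left hrp (by positivity)
    have hIle : (∫ s in (0:ℝ)..h,
        (C₁ * lam ^ ((1:ℝ)/4) * Real.exp (κ * s)
            * (a * Real.exp (κ * s / 2) + 2 * Real.sqrt K) ^ 2
          + C₂ * Real.exp (κ * s)
            * (a * Real.exp (κ * s / 2) + 2 * Real.sqrt K) ^ ((8:ℝ)/3))
          * Real.exp (ν * lam * s))
        ≤ G * ((Real.exp (ν * lam * h) - 1) / (ν * lam)) := by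
      calc (∫ s in (0:ℝ)..h, _) ≤ ∫ s in (0:ℝ)..h, G * Real.exp (ν * lam * s) :=
            intervalIntegral.integral_mono_on hh.le hFint hGint hmono
        _ = G * ((Real.exp (ν * lam * h) - 1) / (ν * lam)) := by
            rw [intervalIntegral.integral_const_mul, aux_exp_integral hc.ne']
    have hexp1 : Real.exp (-(ν * lam * h)) * (Real.exp (ν * lam * h) - 1) ≤ 1 := by
      rw [mul_sub, ← Real.exp_add]
      simp only [neg_add_cancel, Real.exp_zero, mul_one]
      nlinarith [Real.exp_pos (-(ν * lam * h))]
    calc Real.exp (-(ν * lam * h)) * (1 + ∫ s in (0:ℝ)..h,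
          (C₁ * lam ^ ((1:ℝ)/4) * Real.exp (κ * s)
              * (a * Real.exp (κ * s / 2) + 2 * Real.sqrt K) ^ 2
            + C₂ * Real.exp (κ * s)
              * (a * Real.exp (κ * s / 2) + 2 * Real.sqrt K) ^ ((8:ℝ)/3))
            * Real.exp (ν * lam * s))
        ≤ Real.exp (-(ν * lam * h))
            * (1 + G * ((Real.exp (ν * lam * h) - 1) / (ν * lam))) := by
          refine mul_le_mul_of_nonneg_left (add_le_add_right hIle 1) (Real.exp_nonneg _)
      _ = Real.exp (-(ν * lam * h))
            + G * (Real.exp (-(ν * lam * h)) * (Real.exp (ν * lam * h) - 1)) / (ν * lam) := by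
          ring
      _ ≤ Real.exp (-(ν * lam * h)) + G * 1 / (ν * lam) := by
          have h1 : G * (Real.exp (-(ν * lam * h)) * (Real.exp (ν * lam * h) - 1)) ≤ G * 1 :=
            mul_le_mul_of_nonneg_left hexp1 hG0
          have h2 := mul_le_mul_of_nonneg_right h1 (inv_nonneg.2 hc.le)
          simpa [div_eq_mul_inv] using add_le_add_left h2 (Real.exp (-(ν * lam * h)))
      _ = Real.exp (-(ν * lam * h))
          + (C₁ * lam ^ ((1:ℝ)/4) * Real.exp (κ * h) / (ν * lam)) * P ^ 2
          + (C₂ * Real.exp (κ * h) / (ν * lam)) * P ^ ((8:ℝ)/3) := by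
          rw [hGdef]
          ring
  -- nonnegativity of M
  have hMnn : ∀ lam : ℝ, 0 < lam → ∀ ω, 0 ≤ M lam ω := by
    intro lam hlam ω
    rw [hMdef]
    have hint : 0 ≤ ∫ s in (0:ℝ)..h,
        (C₁ * lam ^ ((1:ℝ)/4) * Real.exp (κ * s)
            * (Real.sqrt (ρ₀ ω) * Real.exp (κ * s / 2) + 2 * Real.sqrt K) ^ 2
          + C₂ * Real.exp (κ * s)
            * (Real.sqrt (ρ₀ ω) * Real.exp (κ * s / 2) + 2 * Real.sqrt K) ^ ((8:ℝ)/3))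
          * Real.exp (ν * lam * s) := by
      refine intervalIntegral.integral_nonneg hh.le fun u hu => ?_
      have h1 : 0 ≤ lam ^ ((1:ℝ)/4) := Real.rpow_nonneg hlam.le _
      have h2 : (0:ℝ) ≤ Real.sqrt (ρ₀ ω) * Real.exp (κ * u / 2) + 2 * Real.sqrt K := by
        positivity
      have h3 : 0 ≤ (Real.sqrt (ρ₀ ω) * Real.exp (κ * u / 2) + 2 * Real.sqrt K) ^ ((8:ℝ)/3) :=
        Real.rpow_nonneg h2 _
      have h4 : (0:ℝ) ≤ C₁ * lam ^ ((1:ℝ)/4) * Real.exp (κ * u)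
          * (Real.sqrt (ρ₀ ω) * Real.exp (κ * u / 2) + 2 * Real.sqrt K) ^ 2 := by positivity
      have h5 : (0:ℝ) ≤ C₂ * Real.exp (κ * u)
          * (Real.sqrt (ρ₀ ω) * Real.exp (κ * u / 2) + 2 * Real.sqrt K) ^ ((8:ℝ)/3) := by
        have := hC₂pos.le
        positivity
      positivity
    have := Real.exp_nonneg (-(ν * lam * h))
    nlinarith
  -- integrated bound
  have hIbound : ∀ lam : ℝ, 0 < lam → ∫ ω, M lam ω ∂μ ≤ Real.exp (-(ν * lam * h))
      + (C₁ * lam ^ ((1:ℝ)/4) * Real.exp (κ * h) / (ν * lam)) * A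
      + (C₂ * Real.exp (κ * h) / (ν * lam)) * B := by
    intro lam hlam
    have hgi2 : Integrable (fun ω => Real.exp (-(ν * lam * h))
        + (C₁ * lam ^ ((1:ℝ)/4) * Real.exp (κ * h) / (ν * lam))
            * (Real.sqrt (ρ₀ ω) * Real.exp (κ * h / 2) + 2 * Real.sqrt K) ^ 2) μ :=
      (integrable_const _).add (hIntP2.const_mul _)
    have hgi : Integrable (fun ω => (Real.exp (-(ν * lam * h))
        + (C₁ * lam ^ ((1:ℝ)/4) * Real.exp (κ * h) / (ν * lam))
            * (Real.sqrt (ρ₀ ω) * Real.exp (κ * h / 2) + 2 * Real.sqrt K) ^ 2)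
        + (C₂ * Real.exp (κ * h) / (ν * lam))
            * (Real.sqrt (ρ₀ ω) * Real.exp (κ * h / 2) + 2 * Real.sqrt K) ^ ((8:ℝ)/3)) μ :=
      hgi2.add (hIntP83.const_mul _)
    have hle := integral_mono_of_nonneg
      (Filter.Eventually.of_forall (hMnn lam hlam)) hgi
      (Filter.Eventually.of_forall fun ω => by
        have := hptwise lam hlam ω
        linarith)
    rw [integral_add hgi2 (hIntP83.const_mul _),
      integral_add (integrable_const _) (hIntP2.const_mul _),
      integral_const, integral_const_mul, integral_const_mul] at hle
    rw [hAdef, hBdef]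
    simpa [measure_univ] using hle
  -- the limiting bound
  have hφeq : ∀ lam : ℝ, 0 < lam →
      Real.exp (-(ν * lam * h)) + (C₁ * lam ^ ((1:ℝ)/4) * Real.exp (κ * h) / (ν * lam)) * A
        + (C₂ * Real.exp (κ * h) / (ν * lam)) * B
      = Real.exp (-(ν * h) * lam) + (C₁ * Real.exp (κ * h) * A / ν) * lam ^ (-(3/4 : ℝ))
        + (C₂ * Real.exp (κ * h) * B / ν) * lam⁻¹ := by
    intro lam hlam
    have hl : lam ^ ((1:ℝ)/4) * lam⁻¹ = lam ^ (-(3/4 : ℝ)) := by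
      rw [← Real.rpow_neg_one lam, ← Real.rpow_add hlam]
      norm_num
    rw [show -(ν * lam * h) = -(ν * h) * lam by ring, ← hl]
    field_simp
  have htend : Tendsto (fun l : ℝ => Real.exp (-(ν * h) * l)
      + (C₁ * Real.exp (κ * h) * A / ν) * l ^ (-(3/4 : ℝ))
      + (C₂ * Real.exp (κ * h) * B / ν) * l⁻¹) atTop (𝓝 0) := by
    have t1 : Tendsto (fun l : ℝ => Real.exp (-(ν * h) * l)) atTop (𝓝 0) := by
      refine Real.tendsto_exp_atBot.comp ?_
      exact (tendsto_const_mul_atBot_of_neg (by nlinarith)).2 tendsto_id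
    have t2 : Tendsto (fun l : ℝ => (C₁ * Real.exp (κ * h) * A / ν) * l ^ (-(3/4 : ℝ)))
        atTop (𝓝 0) := by
      have := (tendsto_rpow_neg_atTop (by norm_num : (0:ℝ) < 3/4)).const_mul
        (C₁ * Real.exp (κ * h) * A / ν)
      simpa using this
    have t3 : Tendsto (fun l : ℝ => (C₂ * Real.exp (κ * h) * B / ν) * l⁻¹) atTop (𝓝 0) := by
      have := tendsto_inv_atTop_zero.const_mul (C₂ * Real.exp (κ * h) * B / ν)
      simpa using this
    have := (t1.add t2).add t3
    simpa using this
  have hev := htend.eventually_lt_const (by norm_num : (0:ℝ) < 1)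
  rw [eventually_atTop] at hev
  obtain ⟨N, hN⟩ := hev
  refine ⟨max N 1, fun lam hlam => ?_⟩
  have h1lam : (1:ℝ) < lam := lt_of_le_of_lt (le_max_right N 1) hlam
  have hlam0 : 0 < lam := lt_trans one_pos h1lam
  calc ∫ ω, M lam ω ∂μ
      ≤ Real.exp (-(ν * lam * h))
        + (C₁ * lam ^ ((1:ℝ)/4) * Real.exp (κ * h) / (ν * lam)) * A
        + (C₂ * Real.exp (κ * h) / (ν * lam)) * B := hIbound lam hlam0
    _ = Real.exp (-(ν * h) * lam) + (C₁ * Real.exp (κ * h) * A / ν) * lam ^ (-(3/4 : ℝ))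
        + (C₂ * Real.exp (κ * h) * B / ν) * lam⁻¹ := hφeq lam hlam0
    _ < 1 := hN lam (le_of_lt (lt_of_le_of_lt (le_max_left N 1) hlam))
end

section
/- Explicit threshold for the squeezing inequality (corrected appendix lemma). Let ν, λ₁, κ, h, a, b be positive real numbers, and set C₁ = 2^{−1/4}ν^{−1}λ₁^{−1/4} and C₂ = 5^{5/3}·2^{−22/3}·3·ν^{−5/3}λ₁^{−1/3}. Then for every λ > max( 2·e^{(4/3)κh}·a^{4/3}, 5^{5/3}·2^{−19/3}·3·e^{κh}·b )·λ₁^{−1/3}·ν^{−8/3}, the inequality −νλ + C₁·λ^{1/4}·e^{κh}·a + C₂·e^{κh}·b < 0 holds. -/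
/-- Explicit threshold for the squeezing inequality (corrected appendix lemma): with
`C₁ = 2^{-1/4}ν⁻¹λ₁^{-1/4}` and `C₂ = 5^{5/3}·2^{-22/3}·3·ν^{-5/3}λ₁^{-1/3}`, for every
`λ > max(2e^{(4/3)κh}a^{4/3}, 5^{5/3}·2^{-19/3}·3·e^{κh}b)·λ₁^{-1/3}ν^{-8/3}` one has
`-νλ + C₁λ^{1/4}e^{κh}a + C₂e^{κh}b < 0`. -/
theorem explicit_squeezing_threshold
    (ν lam₁ κ h a b : ℝ)
    (hν : 0 < ν) (hlam₁ : 0 < lam₁) (hκ : 0 < κ) (hh : 0 < h)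
    (ha : 0 < a) (hb : 0 < b)
    (C₁ C₂ : ℝ)
    (hC₁ : C₁ = 2 ^ (-(1 : ℝ) / 4) * ν⁻¹ * lam₁ ^ (-(1 : ℝ) / 4))
    (hC₂ : C₂ = 5 ^ ((5 : ℝ) / 3) * 2 ^ (-(22 : ℝ) / 3) * 3
      * ν ^ (-(5 : ℝ) / 3) * lam₁ ^ (-(1 : ℝ) / 3)) :
    ∀ lam : ℝ,
      max (2 * Real.exp ((4 / 3) * κ * h) * a ^ ((4 : ℝ) / 3))
          (5 ^ ((5 : ℝ) / 3) * 2 ^ (-(19 : ℝ) / 3) * 3 * Real.exp (κ * h) * b)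
        * lam₁ ^ (-(1 : ℝ) / 3) * ν ^ (-(8 : ℝ) / 3) < lam →
      -ν * lam + C₁ * lam ^ ((1 : ℝ) / 4) * Real.exp (κ * h) * a
        + C₂ * Real.exp (κ * h) * b < 0 := by
  intro lam hlam
  set e : ℝ := Real.exp (κ * h) with he_def
  have he : 0 < e := Real.exp_pos _
  set t1 : ℝ := lam₁ ^ (-(1 : ℝ) / 3) with ht1_def
  set t2 : ℝ := ν ^ (-(8 : ℝ) / 3) with ht2_def
  have ht1 : 0 < t1 := Real.rpow_pos_of_pos hlam₁ _
  have ht2 : 0 < t2 := Real.rpow_pos_of_pos hν _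
  set m₁ : ℝ := 2 * Real.exp ((4 / 3) * κ * h) * a ^ ((4 : ℝ) / 3) with hm₁_def
  set m₂ : ℝ := 5 ^ ((5 : ℝ) / 3) * 2 ^ (-(19 : ℝ) / 3) * 3 * e * b with hm₂_def
  have hm1 : 0 < m₁ := by
    have := Real.exp_pos ((4 / 3) * κ * h)
    have := Real.rpow_pos_of_pos ha ((4 : ℝ) / 3)
    positivity
  have hm2 : 0 < m₂ := by
    have h5 : (0:ℝ) < (5:ℝ) ^ ((5 : ℝ) / 3) := Real.rpow_pos_of_pos (by norm_num) _
    have h2 : (0:ℝ) < (2:ℝ) ^ (-(19 : ℝ) / 3) := Real.rpow_pos_of_pos (by norm_num) _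
    positivity
  have h1lt : m₁ * t1 * t2 < lam := by
    calc m₁ * t1 * t2 ≤ max m₁ m₂ * t1 * t2 := by
          gcongr; exact le_max_left _ _
      _ < lam := hlam
  have h2lt : m₂ * t1 * t2 < lam := by
    calc m₂ * t1 * t2 ≤ max m₁ m₂ * t1 * t2 := by
          gcongr; exact le_max_right _ _
      _ < lam := hlam
  have hL : 0 < lam := lt_trans (by positivity) h1lt
  -- Claim A : C₂ * e * b < ν * lam / 2
  have hν1 : ν * t2 = ν ^ (-(5 : ℝ) / 3) := by
    have hadd := Real.rpow_add hν 1 (-(8 : ℝ) / 3)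
    rw [Real.rpow_one] at hadd
    rw [ht2_def, ← hadd]
    norm_num
  have h2pow : (2 : ℝ) ^ (-(19 : ℝ) / 3) / 2 = (2 : ℝ) ^ (-(22 : ℝ) / 3) := by
    rw [div_eq_mul_inv, ← Real.rpow_neg_one (2:ℝ), ← Real.rpow_add (by norm_num : (0:ℝ) < 2)]
    norm_num
  have key2 : ν * (m₂ * t1 * t2) = 2 * (C₂ * e * b) := by
    rw [hC₂, hm₂_def, ← hν1, ← h2pow]
    ring
  have hA : C₂ * e * b < ν * lam / 2 := by
    have := (mul_lt_mul_iff_right₀ hν).mpr h2lt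
    rw [key2] at this
    linarith
  -- Claim B : C₁ * lam^{1/4} * e * a < ν * lam / 2
  have hexp13 : Real.exp ((4 / 3) * κ * h) = e ^ ((4 : ℝ) / 3) := by
    rw [he_def, ← Real.exp_mul]
    ring_nf
  have hID : (m₁ * t1 * t2) ^ ((3 : ℝ) / 4)
      = 2 ^ ((3 : ℝ) / 4) * e * a * (lam₁ ^ (-(1 : ℝ) / 4) * ν ^ (-(2 : ℝ))) := by
    rw [hm₁_def, hexp13, ht1_def, ht2_def,
      Real.mul_rpow (by positivity) (by positivity),
      Real.mul_rpow (by positivity) (by positivity),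
      Real.mul_rpow (by positivity) (by positivity),
      Real.mul_rpow (by positivity) (by positivity),
      ← Real.rpow_mul he.le, ← Real.rpow_mul ha.le,
      ← Real.rpow_mul hlam₁.le, ← Real.rpow_mul hν.le]
    norm_num
    ring
  have hpow : (m₁ * t1 * t2) ^ ((3 : ℝ) / 4) < lam ^ ((3 : ℝ) / 4) :=
    Real.rpow_lt_rpow (by positivity) h1lt (by norm_num)
  have hsplit : lam ^ ((1 : ℝ) / 4) * lam ^ ((3 : ℝ) / 4) = lam := by
    rw [← Real.rpow_add hL]
    norm_num
  have hν2 : ν * ν ^ (-(2 : ℝ)) = ν⁻¹ := by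
    have hadd := Real.rpow_add hν 1 (-(2 : ℝ))
    rw [Real.rpow_one] at hadd
    rw [← hadd, ← Real.rpow_neg_one]
    norm_num
  have h2pow' : (2 : ℝ) ^ ((3 : ℝ) / 4) / 2 = (2 : ℝ) ^ (-(1 : ℝ) / 4) := by
    rw [div_eq_mul_inv, ← Real.rpow_neg_one (2:ℝ), ← Real.rpow_add (by norm_num : (0:ℝ) < 2)]
    norm_num
  have key1 : ν * ((m₁ * t1 * t2) ^ ((3 : ℝ) / 4)) = 2 * (C₁ * e * a) := by
    rw [hID, hC₁, ← hν2, ← h2pow']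
    ring
  have hB : C₁ * lam ^ ((1 : ℝ) / 4) * e * a < ν * lam / 2 := by
    have hq : ν * ((m₁ * t1 * t2) ^ ((3 : ℝ) / 4)) < ν * lam ^ ((3 : ℝ) / 4) :=
      (mul_lt_mul_iff_right₀ hν).mpr hpow
    rw [key1] at hq
    have hl4 : 0 < lam ^ ((1 : ℝ) / 4) := Real.rpow_pos_of_pos hL _
    have := (mul_lt_mul_iff_right₀ hl4).mpr hq
    calc C₁ * lam ^ ((1 : ℝ) / 4) * e * a
        = lam ^ ((1 : ℝ) / 4) * (2 * (C₁ * e * a)) / 2 := by ring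
      _ < lam ^ ((1 : ℝ) / 4) * (ν * lam ^ ((3 : ℝ) / 4)) / 2 := by linarith
      _ = ν * (lam ^ ((1 : ℝ) / 4) * lam ^ ((3 : ℝ) / 4)) / 2 := by ring
      _ = ν * lam / 2 := by rw [hsplit]
  linarith
end
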